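/- For every n ≥ 2 and 0 ≤ i ≤ n−1, the iso-horn inclusion V_i[n] ↪ ∇̄_i[n] lies in the weakly saturated class generated by the 2-Segal horn inclusions (in fact it is a countable composition of pushouts of 2-Segal horn inclusions). -/

import Mathlib

open CategoryTheory Simplicial CategoryTheory.Limits

set_option linter.unusedVariables false

namespace Q2S

/-! ## Triangulations of the (n+1)-gon -/

/-- `(p, q)` is a chord of one of the triangles in `tris`. -/
def IsChord (tris : Finset (ℕ × ℕ × ℕ)) (p q : ℕ) : Prop :=
  ∃ t ∈ tris, (p, q) = (t.1, t.2.1) ∨ (p, q) = (t.2.1, t.2.2) ∨ (p, q) = (t.1, t.2.2)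

/-- A triangulation of the `(n+1)`-gon with vertices `0, …, n`: a set of `n - 1`
triples `a < b < c` of vertices whose chords are pairwise noncrossing. -/
structure Triangulation (n : ℕ) where
  tris : Finset (ℕ × ℕ × ℕ)
  card_eq : tris.card = n - 1
  lt₁ : ∀ t ∈ tris, t.1 < t.2.1
  lt₂ : ∀ t ∈ tris, t.2.1 < t.2.2
  le_n : ∀ t ∈ tris, t.2.2 ≤ n
  noncrossing : ∀ p q r s : ℕ, IsChord tris p q → IsChord tris r s →
    ¬(p < r ∧ r < q ∧ q < s)

/-- A vertex `i` is extreme in a triangulation of the `(n+1)`-gon. -/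
def Triangulation.IsExtreme {n : ℕ} (T : Triangulation n) (i : ℕ) : Prop :=
  (0 < i ∧ i < n ∧ (i - 1, i, i + 1) ∈ T.tris) ∨
  (i = 0 ∧ (0, 1, n) ∈ T.tris) ∨
  (i = n ∧ (0, n - 1, n) ∈ T.tris)

/-! ## Subcomplexes of the standard simplex -/

/-- The simplicial subset of `Δ[n]` cut out by a predicate on simplices which is closed
under the simplicial operators. -/
def simplexSub (n : ℕ) (P : ∀ ⦃m : SimplexCategoryᵒᵖ⦄, Δ[n].obj m → Prop)
    (hP : ∀ ⦃m m' : SimplexCategoryᵒᵖ⦄ (φ : m ⟶ m') (α : Δ[n].obj m), P α → P (Δ[n].map φ α)) :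
    SSet where
  obj m := { α : Δ[n].obj m // P α }
  map φ := TypeCat.ofHom fun x => ⟨Δ[n].map φ x.1, hP φ x.1 x.2⟩
  map_id m := by refine ConcreteCategory.hom_ext _ _ fun x => ?_; exact Subtype.ext (congrArg (fun g => g x.1) (Δ[n].map_id m))
  map_comp φ ψ := by refine ConcreteCategory.hom_ext _ _ fun x => ?_; exact Subtype.ext (congrArg (fun g => g x.1) (Δ[n].map_comp φ ψ))

/-- The inclusion of such a simplicial subset into `Δ[n]`. -/
def simplexSubIncl (n : ℕ) (P : ∀ ⦃m : SimplexCategoryᵒᵖ⦄, Δ[n].obj m → Prop)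
    (hP : ∀ ⦃m m' : SimplexCategoryᵒᵖ⦄ (φ : m ⟶ m') (α : Δ[n].obj m), P α → P (Δ[n].map φ α)) :
    simplexSub n P hP ⟶ Δ[n] where
  app m := TypeCat.ofHom fun x => x.1
  naturality _ _ _ := rfl

lemma genHorn_closed (n : ℕ) (S : Set (Fin (n + 1))) ⦃m m' : SimplexCategoryᵒᵖ⦄
    (φ : m ⟶ m') (α : Δ[n].obj m) (h : ∃ i ∈ S, ∀ k, SSet.stdSimplex.asOrderHom α k ≠ i) :
    ∃ i ∈ S, ∀ k, SSet.stdSimplex.asOrderHom (Δ[n].map φ α) k ≠ i := by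
  obtain ⟨i, hiS, hi⟩ := h
  exact ⟨i, hiS, fun k => hi _⟩

/-- The generalized horn `Λ^S[n] ⊆ Δ[n]`: the union of the faces `dᵢ(Δ[n])` for `i ∈ S`.
Its simplices are those maps `[m] → [n]` whose image misses some `i ∈ S`. -/
def genHorn (n : ℕ) (S : Set (Fin (n + 1))) : SSet :=
  simplexSub n (fun _ α => ∃ i ∈ S, ∀ k, SSet.stdSimplex.asOrderHom α k ≠ i) (genHorn_closed n S)

/-- The inclusion `Λ^S[n] ↪ Δ[n]` of a generalized horn. -/
def genHornIncl (n : ℕ) (S : Set (Fin (n + 1))) : genHorn n S ⟶ Δ[n] :=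
  simplexSubIncl n _ _

/-! ## Broken subsets and 2-Segal horns -/

/-- A subset `S ⊆ {0, …, n}` is broken. -/
def BrokenSet {n : ℕ} (S : Set (Fin (n + 1))) : Prop :=
  ∃ a b c d : Fin (n + 1), a < b ∧ b < c ∧ c < d ∧
    ((a ∈ S ∧ c ∈ S ∧ b ∉ S ∧ d ∉ S) ∨ (b ∈ S ∧ d ∈ S ∧ a ∉ S ∧ c ∉ S))

/-- The pair `{i, j}` with `i < j` is broken in `{0, …, n}`:
`i < j - 1` and not (`i = 0` and `j = n`). -/
def PairBroken {n : ℕ} (i j : Fin (n + 1)) : Prop :=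
  (i : ℕ) + 1 < (j : ℕ) ∧ ¬((i : ℕ) = 0 ∧ (j : ℕ) = n)

/-- The 2-Segal horn `Λ^{i,j}[n]`: the union of all faces of `Δ[n]` except `dᵢ` and `dⱼ`. -/
def twoSegalHorn (n : ℕ) (i j : Fin (n + 1)) : SSet :=
  genHorn n ({i, j}ᶜ)

/-- The inclusion of the 2-Segal horn `Λ^{i,j}[n] ↪ Δ[n]`. -/
def twoSegalHornIncl (n : ℕ) (i j : Fin (n + 1)) : twoSegalHorn n i j ⟶ Δ[n] :=
  genHornIncl n _

/-- A simplicial set is a quasi-2-Segal set if it has fillers for all 2-Segal horns. -/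
def IsQuasiTwoSegal (X : SSet) : Prop :=
  ∀ (n : ℕ) (i j : Fin (n + 1)), 3 ≤ n → PairBroken i j →
    ∀ f : twoSegalHorn n i j ⟶ X, ∃ g : Δ[n] ⟶ X, twoSegalHornIncl n i j ≫ g = f

/-! ## 2-Segal spines -/

lemma spine_closed {n : ℕ} (T : Triangulation n) ⦃m m' : SimplexCategoryᵒᵖ⦄
    (φ : m ⟶ m') (α : Δ[n].obj m)
    (h : ∃ t ∈ T.tris, ∀ k, (SSet.stdSimplex.asOrderHom α k : ℕ) = t.1 ∨
      (SSet.stdSimplex.asOrderHom α k : ℕ) = t.2.1 ∨ (SSet.stdSimplex.asOrderHom α k : ℕ) = t.2.2) :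
    ∃ t ∈ T.tris, ∀ k, (SSet.stdSimplex.asOrderHom (Δ[n].map φ α) k : ℕ) = t.1 ∨
      (SSet.stdSimplex.asOrderHom (Δ[n].map φ α) k : ℕ) = t.2.1 ∨
      (SSet.stdSimplex.asOrderHom (Δ[n].map φ α) k : ℕ) = t.2.2 := by
  obtain ⟨t, htT, ht⟩ := h
  exact ⟨t, htT, fun k => ht _⟩

/-- The 2-Segal spine associated to a triangulation `T` of the `(n+1)`-gon:
the union of the 2-dimensional faces of `Δ[n]` indexed by the triangles of `T`. -/
def twoSegalSpine (n : ℕ) (T : Triangulation n) : SSet :=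
  simplexSub n
    (fun _ α => ∃ t ∈ T.tris, ∀ k, (SSet.stdSimplex.asOrderHom α k : ℕ) = t.1 ∨
      (SSet.stdSimplex.asOrderHom α k : ℕ) = t.2.1 ∨ (SSet.stdSimplex.asOrderHom α k : ℕ) = t.2.2)
    (spine_closed T)

/-- The 2-Segal spine inclusion. -/
def twoSegalSpineIncl (n : ℕ) (T : Triangulation n) : twoSegalSpine n T ⟶ Δ[n] :=
  simplexSubIncl n _ _

end Q2S

namespace Q2S

universe v u

variable {C : Type u} [Category.{v} C]

/-! ## Retracts, transfinite composition, weakly saturated classes -/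

/-- `f` is a retract of `g` in the arrow category. -/
def IsRetractOf {X Y Z W : C} (f : X ⟶ Y) (g : Z ⟶ W) : Prop :=
  ∃ (a : X ⟶ Z) (b : Z ⟶ X) (c : Y ⟶ W) (d : W ⟶ Y),
    a ≫ b = 𝟙 X ∧ c ≫ d = 𝟙 Y ∧ a ≫ g = f ≫ c ∧ g ≫ d = b ≫ f

/-- A class of morphisms is stable under retracts. -/
def StableUnderRetracts (P : MorphismProperty C) : Prop :=
  ∀ ⦃X Y Z W : C⦄ (f : X ⟶ Y) (g : Z ⟶ W), IsRetractOf f g → P g → P f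

/-- The inclusion functor of `Set.Iio j` into a preorder `J`. -/
def iioFunctor {J : Type*} [Preorder J] (j : J) : Set.Iio j ⥤ J :=
  Monotone.functor (f := (Subtype.val : Set.Iio j → J)) (fun _ _ h => h)

/-- The cocone on the restriction of `F` to `Set.Iio j` with apex `F.obj j`. -/
def coconeAt {J : Type*} [Preorder J] (F : J ⥤ C) (j : J) :
    Cocone (iioFunctor j ⋙ F) where
  pt := F.obj j
  ι :=
    { app := fun i => F.map (homOfLE i.2.le)
      naturality := fun a b u => by
        dsimp [iioFunctor, Monotone.functor]
        rw [← F.map_comp, Category.comp_id]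
        rfl }

/-- A class of morphisms is stable under transfinite composition: for any well-ordered
diagram whose successor maps lie in `P` and which is continuous at limit stages, the
map from the bottom object to any colimit lies in `P`. -/
def StableUnderTransfiniteComposition (P : MorphismProperty C) : Prop :=
  ∀ (J : Type) [LinearOrder J] [SuccOrder J] [OrderBot J] [WellFoundedLT J]
    (F : J ⥤ C),
    (∀ j : J, ¬IsMax j → P (F.map (homOfLE (Order.le_succ j)))) →
    (∀ j : J, Order.IsSuccLimit j → Nonempty (IsColimit (coconeAt F j))) →
    ∀ (c : Cocone F), IsColimit c → P (c.ι.app ⊥)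

/-- A weakly saturated class of morphisms: one stable under cobase change (pushouts),
retracts, and transfinite composition. -/
def WeaklySaturated (P : MorphismProperty C) : Prop :=
  P.IsStableUnderCobaseChange ∧ StableUnderRetracts P ∧ StableUnderTransfiniteComposition P

/-- The weakly saturated class generated by `S`: the smallest weakly saturated class
containing `S`. -/
def Saturation (S : MorphismProperty C) : MorphismProperty C :=
  fun _ _ f => ∀ P : MorphismProperty C, WeaklySaturated P → S ≤ P → P f

/-- The class of morphisms which are cobase changes (pushouts) of morphisms in `S`. -/
def PushoutsOf (S : MorphismProperty C) : MorphismProperty C := fun X Y f =>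
  ∃ (A B : C) (g : A ⟶ B) (_ : S g) (t : A ⟶ X) (u : B ⟶ Y), IsPushout g t u f

/-- The closure of a class of morphisms under finite composition. -/
inductive FinComp (S : MorphismProperty C) : ∀ ⦃X Y : C⦄, (X ⟶ Y) → Prop where
  | of {X Y : C} (f : X ⟶ Y) : S f → FinComp S f
  /-- Composition. -/
  | comp {X Y Z : C} (f : X ⟶ Y) (g : Y ⟶ Z) :
      FinComp S f → FinComp S g → FinComp S (f ≫ g)

end Q2S

/-! ## Generating classes of inclusions -/

namespace Q2S

/-- The class of 2-Segal horn inclusions `Λ^{i,j}[n] ↪ Δ[n]` (with `n ≥ 3` and `{i,j}` broken). -/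
inductive TwoSegalHorns : ∀ ⦃X Y : SSet⦄, (X ⟶ Y) → Prop where
  | mk (n : ℕ) (i j : Fin (n + 1)) (hn : 3 ≤ n) (hij : PairBroken i j) :
      TwoSegalHorns (twoSegalHornIncl n i j)

/-- The class of generalized 2-Segal horn inclusions `Λ^S[n] ↪ Δ[n]`
(with `n ≥ 3` and `S` broken). -/
inductive GenTwoSegalHorns : ∀ ⦃X Y : SSet⦄, (X ⟶ Y) → Prop where
  | mk (n : ℕ) (S : Set (Fin (n + 1))) (hn : 3 ≤ n) (hS : BrokenSet S) :
      GenTwoSegalHorns (genHornIncl n S)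

/-- The class of generalized 2-Segal horn inclusions missing an outer face, i.e. whose
set of missing faces contains `0` or contains `n`. -/
inductive GenTwoSegalHornsOuter : ∀ ⦃X Y : SSet⦄, (X ⟶ Y) → Prop where
  | mk (n : ℕ) (S : Set (Fin (n + 1))) (hn : 3 ≤ n) (hS : BrokenSet S)
      (houter : (0 : Fin (n + 1)) ∉ S ∨ Fin.last n ∉ S) :
      GenTwoSegalHornsOuter (genHornIncl n S)

/-- The class of 2-Segal spine inclusions. -/
inductive TwoSegalSpines : ∀ ⦃X Y : SSet⦄, (X ⟶ Y) → Prop where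
  | mk (n : ℕ) (hn : 3 ≤ n) (T : Triangulation n) :
      TwoSegalSpines (twoSegalSpineIncl n T)

/-- The class of 2-Segal horn inclusions, as a `MorphismProperty`. -/
def twoSegalHornClass : CategoryTheory.MorphismProperty SSet := fun _ _ f => TwoSegalHorns f

/-- The class of generalized 2-Segal horn inclusions missing an outer face,
as a `MorphismProperty`. -/
def genTwoSegalHornOuterClass : CategoryTheory.MorphismProperty SSet :=
  fun _ _ f => GenTwoSegalHornsOuter f

/-- The class of 2-Segal spine inclusions, as a `MorphismProperty`. -/
def twoSegalSpineClass : CategoryTheory.MorphismProperty SSet := fun _ _ f => TwoSegalSpines f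

/-- The 2-Segal anodyne maps: the weakly saturated class generated by the
2-Segal horn inclusions. -/
def TwoSegalAnodyne : CategoryTheory.MorphismProperty SSet :=
  Saturation twoSegalHornClass

end Q2S

namespace Q2S

/-! ## Isoplexes and iso-horns -/

/-- The preorder relation of `[n]ᵢ`: the usual order on `{0, …, n}` together with the
relation `i + 1 ≤ i`, making `i` and `i + 1` isomorphic. -/
def isoRel (n i : ℕ) (x y : Fin (n + 1)) : Prop :=
  x ≤ y ∨ ((x : ℕ) = i + 1 ∧ (y : ℕ) = i)

/-- The isoplex `∇̄ᵢ[n]`: the nerve of the preorder `[n]ᵢ`. Its `m`-simplices are the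
functions `{0, …, m} → {0, …, n}` which are monotone for the preorder `[n]ᵢ`. -/
def isoPlex (n i : ℕ) : SSet where
  obj m := { f : Fin (m.unop.len + 1) → Fin (n + 1) //
    ∀ a b, a ≤ b → isoRel n i (f a) (f b) }
  map φ := TypeCat.ofHom fun f => ⟨f.1 ∘ φ.unop.toOrderHom, fun a b h => f.2 _ _ (φ.unop.toOrderHom.monotone h)⟩
  map_id _ := by refine ConcreteCategory.hom_ext _ _ fun f => ?_; exact Subtype.ext rfl
  map_comp _ _ := by refine ConcreteCategory.hom_ext _ _ fun f => ?_; exact Subtype.ext rfl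

/-- The iso-horn `𝕍ᵢ[n] ⊆ ∇̄ᵢ[n]`: the union of the faces `dⱼ∇̄ᵢ[n]` (the full simplicial
subsets on the vertices other than `j`) for `j ≠ i`. -/
def isoHorn (n i : ℕ) : SSet where
  obj m := { f : (isoPlex n i).obj m // ∃ j : Fin (n + 1), (j : ℕ) ≠ i ∧ ∀ a, f.1 a ≠ j }
  map φ := TypeCat.ofHom fun f => ⟨(isoPlex n i).map φ f.1, by
    obtain ⟨j, hj, h⟩ := f.2
    exact ⟨j, hj, fun a => h _⟩⟩
  map_id m := by refine ConcreteCategory.hom_ext _ _ fun f => ?_; exact Subtype.ext (congrArg (fun g => g f.1) ((isoPlex n i).map_id m))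
  map_comp φ ψ := by refine ConcreteCategory.hom_ext _ _ fun f => ?_; exact Subtype.ext (congrArg (fun g => g f.1) ((isoPlex n i).map_comp φ ψ))

/-- The iso-horn inclusion `𝕍ᵢ[n] ↪ ∇̄ᵢ[n]`. -/
def isoHornIncl (n i : ℕ) : isoHorn n i ⟶ isoPlex n i where
  app _ := TypeCat.ofHom fun f => f.1
  naturality _ _ _ := rfl

end Q2S



open CategoryTheory Simplicial CategoryTheory.Limits

namespace Q2S
namespace Aux

/-- The word misses some vertex other than `i`. -/
def Miss (i : ℕ) {n M : ℕ} (f : Fin (M + 1) → Fin (n + 1)) : Prop :=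
  ∃ j : Fin (n + 1), (j : ℕ) ≠ i ∧ ∀ a, f a ≠ j

/-- The word hits every vertex other than `i`. -/
def Full (i : ℕ) {n M : ℕ} (f : Fin (M + 1) → Fin (n + 1)) : Prop :=
  ∀ v : Fin (n + 1), (v : ℕ) ≠ i → ∃ a, f a = v

/-- Monotone for the preorder `[n]_i`. -/
def IMono (i : ℕ) {n M : ℕ} (f : Fin (M + 1) → Fin (n + 1)) : Prop :=
  ∀ a b, a ≤ b → isoRel n i (f a) (f b)

/-- The set of descent positions of a word. -/
def Desc {n M : ℕ} (f : Fin (M + 1) → Fin (n + 1)) : Finset (Fin M) :=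
  Finset.univ.filter (fun c => f c.succ < f c.castSucc)

/-- Number of descents. -/
def dcnt {n M : ℕ} (f : Fin (M + 1) → Fin (n + 1)) : ℕ := (Desc f).card

/-- Every occurrence of `i` is followed (weakly) by an occurrence of `i+1`. -/
def Htok (i : ℕ) {n M : ℕ} (f : Fin (M + 1) → Fin (n + 1)) : Prop :=
  ∀ a, (f a : ℕ) = i → ∃ b, a ≤ b ∧ (f b : ℕ) = i + 1

open Classical in
/-- The rank of a word. -/
noncomputable def rk (i : ℕ) {n M : ℕ} (f : Fin (M + 1) → Fin (n + 1)) : ℕ :=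
  dcnt f + (if Htok i f then 1 else 0)

/-- The predicate cutting out the `k`-th stage of the filtration. -/
def pred (i k : ℕ) {n M : ℕ} (f : Fin (M + 1) → Fin (n + 1)) : Prop :=
  Miss i f ∨ (Full i f ∧ rk i f ≤ k)

variable {n i : ℕ}

lemma not_miss_iff {M : ℕ} {f : Fin (M + 1) → Fin (n + 1)} :
    ¬ Miss i f ↔ Full i f := by
  constructor
  · intro h v hv
    by_contra hc
    push_neg at hc
    exact h ⟨v, hv, hc⟩
  · rintro h ⟨j, hj, hall⟩
    obtain ⟨a, ha⟩ := h j hj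
    exact hall a ha

lemma mem_Desc {M : ℕ} {f : Fin (M + 1) → Fin (n + 1)} {c : Fin M} :
    c ∈ Desc f ↔ f c.succ < f c.castSucc := by
  simp [Desc]

lemma drop_vals {M : ℕ} {f : Fin (M + 1) → Fin (n + 1)} (hf : IMono i f)
    {a b : Fin (M + 1)} (hab : a ≤ b) (hlt : f b < f a) :
    (f a : ℕ) = i + 1 ∧ (f b : ℕ) = i := by
  rcases hf a b hab with h | h
  · exact absurd h (not_le.mpr hlt)
  · exact h

lemma descent_between {M : ℕ} (f : Fin (M + 1) → Fin (n + 1)) (u v : Fin (M + 1))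
    (huv : u ≤ v) (hlt : f v < f u) :
    ∃ c : Fin M, u ≤ c.castSucc ∧ c.succ ≤ v ∧ f c.succ < f c.castSucc := by
  suffices h : ∀ (N : ℕ) (u v : Fin (M + 1)), (v : ℕ) ≤ N → u ≤ v → f v < f u →
      ∃ c : Fin M, u ≤ c.castSucc ∧ c.succ ≤ v ∧ f c.succ < f c.castSucc from
    h (v : ℕ) u v le_rfl huv hlt
  intro N
  induction N with
  | zero =>
    intro u v hv huv hlt
    have : u = v := le_antisymm huv (by omega)
    subst this
    exact absurd hlt (lt_irrefl _)
  | succ N ih =>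
    intro u v hv huv hlt
    have hne : u ≠ v := by rintro rfl; exact absurd hlt (lt_irrefl _)
    have hulv : (u : ℕ) < (v : ℕ) := Fin.lt_def.mp (lt_of_le_of_ne huv hne)
    have hvpos : 1 ≤ (v : ℕ) := by omega
    have hvM : (v : ℕ) - 1 < M := by omega
    obtain ⟨w, hwv⟩ : ∃ w : Fin M, (w : ℕ) = (v : ℕ) - 1 := ⟨⟨(v : ℕ) - 1, hvM⟩, rfl⟩
    have hwsucc : w.succ = v := by
      apply Fin.ext
      simp [Fin.val_succ]
      omega
    by_cases hc : f w.succ < f w.castSucc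
    · exact ⟨w, by simp [Fin.le_def]; omega, by rw [hwsucc], hc⟩
    · have hle : f w.castSucc ≤ f v := by
        have := not_lt.mp hc
        rwa [hwsucc] at this
      have hlt' : f w.castSucc < f u := lt_of_le_of_lt hle hlt
      have huw : u ≤ w.castSucc := by
        simp only [Fin.le_def, Fin.coe_castSucc]
        omega
      obtain ⟨c, h1, h2, h3⟩ := ih u w.castSucc (by simp [Fin.coe_castSucc]; omega) huw hlt'
      refine ⟨c, h1, le_trans h2 ?_, h3⟩
      simp only [Fin.le_def, Fin.coe_castSucc]
      omega

lemma IMono_comp {M M' : ℕ} {f : Fin (M + 1) → Fin (n + 1)} (hf : IMono i f)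
    (φ : Fin (M' + 1) →o Fin (M + 1)) : IMono i (f ∘ φ) :=
  fun a b h => hf _ _ (φ.monotone h)

lemma exists_pick {M M' : ℕ} (f : Fin (M + 1) → Fin (n + 1))
    (φ : Fin (M' + 1) →o Fin (M + 1)) :
    ∃ ψ : (c : Fin M') → c ∈ Desc (f ∘ φ) → Fin M,
      (∀ c hc, ψ c hc ∈ Desc f) ∧ (∀ c hc, φ c.castSucc ≤ (ψ c hc).castSucc) ∧
      (∀ c hc, (ψ c hc).succ ≤ φ c.succ) ∧
      (∀ a b ha hb, a < b → ψ a ha < ψ b hb) := by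
  have key : ∀ c (_ : c ∈ Desc (f ∘ φ)), ∃ c' : Fin M,
      c' ∈ Desc f ∧ φ c.castSucc ≤ c'.castSucc ∧ c'.succ ≤ φ c.succ := by
    intro c hc
    rw [mem_Desc] at hc
    obtain ⟨c', h1, h2, h3⟩ := descent_between f (φ c.castSucc) (φ c.succ)
      (φ.monotone (Fin.castSucc_le_succ c)) hc
    exact ⟨c', mem_Desc.mpr h3, h1, h2⟩
  choose ψ h1 h2 h3 using key
  refine ⟨ψ, h1, h2, h3, ?_⟩
  intro a b ha hb hab
  have hm1 : (ψ a ha).succ ≤ φ b.castSucc := by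
    refine le_trans (h3 a ha) (φ.monotone ?_)
    simp only [Fin.le_def, Fin.val_succ, Fin.coe_castSucc]
    exact Fin.lt_def.mp hab
  have hm2 := le_trans hm1 (h2 b hb)
  simp only [Fin.le_def, Fin.val_succ, Fin.coe_castSucc] at hm2
  simp only [Fin.lt_def]
  omega

lemma dcnt_comp_le {M M' : ℕ} (f : Fin (M + 1) → Fin (n + 1))
    (φ : Fin (M' + 1) →o Fin (M + 1)) : dcnt (f ∘ φ) ≤ dcnt f := by
  classical
  obtain ⟨ψ, h1, _, _, h4⟩ := exists_pick f φ
  calc (Desc (f ∘ φ)).card = (Desc (f ∘ φ)).attach.card := Finset.card_attach.symm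
    _ ≤ (Desc f).card := by
        apply Finset.card_le_card_of_injOn (fun c => ψ c.1 c.2)
        · intro a _; exact h1 a.1 a.2
        · intro a _ b _ hab
          rcases lt_trichotomy a.1 b.1 with h | h | h
          · exact absurd hab (ne_of_lt (h4 _ _ _ _ h))
          · exact Subtype.ext h
          · exact absurd hab.symm (ne_of_lt (h4 _ _ _ _ h))

lemma htok_of_not {M : ℕ} {f : Fin (M + 1) → Fin (n + 1)} (h : ¬ Htok i f) :
    ∃ a₀, (f a₀ : ℕ) = i ∧ ∀ b, a₀ ≤ b → (f b : ℕ) ≠ i + 1 := by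
  unfold Htok at h
  push_neg at h
  obtain ⟨a, ha1, ha2⟩ := h
  exact ⟨a, ha1, fun b hb => ha2 b hb⟩

lemma rk_comp_le {M M' : ℕ} {f : Fin (M + 1) → Fin (n + 1)} (hf : IMono i f)
    (φ : Fin (M' + 1) →o Fin (M + 1)) (hi : i < n) (hfull : Full i (f ∘ φ)) :
    rk i (f ∘ φ) ≤ rk i f := by
  classical
  by_cases hg : Htok i (f ∘ φ)
  · by_cases hff : Htok i f
    · rw [rk, rk, if_pos hg, if_pos hff]
      exact Nat.add_le_add_right (dcnt_comp_le f φ) 1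
    · rw [rk, rk, if_pos hg, if_neg hff]
      suffices h : dcnt (f ∘ φ) < dcnt f by omega
      obtain ⟨a₀, ha₀, hno⟩ := htok_of_not hff
      set g := f ∘ φ with hgdef
      have hgm : IMono i g := IMono_comp hf φ
      -- the last position where g takes value i+1
      have hvlt : i + 1 < n + 1 := by omega
      obtain ⟨astar0, hastar0⟩ := hfull ⟨i + 1, hvlt⟩ (by simp)
      set s := Finset.univ.filter (fun a : Fin (M' + 1) => ((g a : ℕ) = i + 1)) with hs
      have hsne : s.Nonempty := ⟨astar0, by simp [hs, hastar0]⟩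
      set cstar := s.max' hsne with hcstar
      have hcs : (g cstar : ℕ) = i + 1 := by
        have := s.max'_mem hsne
        simpa [hs] using this
      have hcsle : ∀ a : Fin (M' + 1), (g a : ℕ) = i + 1 → a ≤ cstar := by
        intro a ha
        exact s.le_max' a (by simp [hs, ha])
      have hcs' : (f (φ cstar) : ℕ) = i + 1 := hcs
      have hlt : φ cstar < a₀ := by
        by_contra hcon
        push_neg at hcon
        exact hno (φ cstar) hcon hcs
      obtain ⟨δ, hδ1, hδ2, hδ3⟩ := descent_between f (φ cstar) a₀ (le_of_lt hlt)
        (by rw [Fin.lt_def, ha₀, hcs']; omega)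
      have hδD : δ ∈ Desc f := mem_Desc.mpr hδ3
      obtain ⟨ψ, h1, _, h3, h4⟩ := exists_pick f φ
      have hψδ : ∀ c hc, ψ c hc < δ := by
        intro c hc
        have hdrop := drop_vals hgm (Fin.castSucc_le_succ c) (mem_Desc.mp hc)
        have hccs : c.castSucc < cstar := by
          have hle := hcsle c.castSucc hdrop.1
          rcases lt_or_eq_of_le hle with h | h
          · exact h
          · exfalso
            obtain ⟨b, hb1, hb2⟩ := hg c.succ hdrop.2
            have := hcsle b hb2
            rw [← h] at this
            have h5 := Fin.lt_def.mp (lt_of_le_of_lt this (Fin.castSucc_lt_succ (i := c)))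
            have h6 := Fin.le_def.mp hb1
            simp [Fin.val_succ] at h5 h6
            omega
        have hsucc : c.succ ≤ cstar := by
          rw [Fin.le_def, Fin.val_succ]
          have := Fin.lt_def.mp hccs
          simp at this
          omega
        have := le_trans (h3 c hc) (le_trans (φ.monotone hsucc) hδ1)
        rw [Fin.le_def, Fin.val_succ, Fin.coe_castSucc] at this
        rw [Fin.lt_def]
        omega
      have hcard : dcnt g ≤ ((Desc f).erase δ).card := by
        calc (Desc g).card = (Desc g).attach.card := Finset.card_attach.symm
          _ ≤ ((Desc f).erase δ).card := by
              apply Finset.card_le_card_of_injOn (fun c => ψ c.1 c.2)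
              · intro a _
                exact Finset.mem_erase.mpr ⟨ne_of_lt (hψδ a.1 a.2), h1 a.1 a.2⟩
              · intro a _ b _ hab
                rcases lt_trichotomy a.1 b.1 with h | h | h
                · exact absurd hab (ne_of_lt (h4 _ _ _ _ h))
                · exact Subtype.ext h
                · exact absurd hab.symm (ne_of_lt (h4 _ _ _ _ h))
      rw [Finset.card_erase_of_mem hδD] at hcard
      have hpos : 0 < (Desc f).card := Finset.card_pos.mpr ⟨δ, hδD⟩
      unfold dcnt at *
      omega
  · rw [rk, rk, if_neg hg]
    have := dcnt_comp_le f φ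
    split <;> omega

lemma one_le_rk {M : ℕ} {f : Fin (M + 1) → Fin (n + 1)} (hf : IMono i f)
    (hfull : Full i f) (hi : i < n) : 1 ≤ rk i f := by
  classical
  by_cases h : Htok i f
  · rw [rk, if_pos h]; omega
  · rw [rk, if_neg h]
    obtain ⟨a₀, ha₀, hno⟩ := htok_of_not h
    obtain ⟨b, hb⟩ := hfull ⟨i + 1, by omega⟩ (by simp)
    have hbv : (f b : ℕ) = i + 1 := by rw [hb]
    have hlt : b < a₀ := by
      by_contra hcon
      push_neg at hcon
      exact hno b hcon hbv
    obtain ⟨c, _, _, hc3⟩ := descent_between f b a₀ (le_of_lt hlt)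
      (by rw [Fin.lt_def, ha₀, hbv]; omega)
    have : c ∈ Desc f := mem_Desc.mpr hc3
    have := Finset.card_pos.mpr ⟨c, this⟩
    unfold dcnt
    omega

lemma miss_comp {M M' : ℕ} {f : Fin (M + 1) → Fin (n + 1)} (h : Miss i f)
    (φ : Fin (M' + 1) →o Fin (M + 1)) : Miss i (f ∘ φ) := by
  obtain ⟨j, hj, hall⟩ := h
  exact ⟨j, hj, fun a => hall (φ a)⟩

lemma pred_comp {k M M' : ℕ} {f : Fin (M + 1) → Fin (n + 1)} (hf : IMono i f)
    (hi : i < n) (h : pred i k f) (φ : Fin (M' + 1) →o Fin (M + 1)) :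
    pred i k (f ∘ φ) := by
  by_cases hm : Miss i (f ∘ φ)
  · exact Or.inl hm
  · have hfull : Full i (f ∘ φ) := not_miss_iff.mp hm
    rcases h with hmf | ⟨_, hrk⟩
    · exact absurd (miss_comp hmf φ) hm
    · exact Or.inr ⟨hfull, le_trans (rk_comp_le hf φ hi hfull) hrk⟩

end Aux
end Q2S

open CategoryTheory Simplicial CategoryTheory.Limits

namespace Q2S
namespace Aux

/-- The `ℕ`-level word of the attaching simplex at step `k`. -/
def Wnat (i k p : ℕ) : ℕ :=
  if p < i then p else if p ≤ i + 2*k + 2 then i + (p - i) % 2 else p - (2*k + 1)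

/-- The attaching word `W : Δ[n+2k+1] → ∇̄ᵢ[n]` at step `k`. -/
def Wf (n i k : ℕ) : Fin (n + 2*k + 2) → Fin (n + 1) := fun p =>
  ⟨Wnat i k p % (n + 1), Nat.mod_lt _ (Nat.succ_pos n)⟩

variable {n i k : ℕ}

lemma Wnat_le (hi : i < n) {p : ℕ} (hp : p < n + 2*k + 2) : Wnat i k p ≤ n := by
  unfold Wnat; split_ifs <;> omega

lemma Wf_val (hi : i < n) (p : Fin (n + 2*k + 2)) :
    ((Wf n i k p) : ℕ) = Wnat i k p :=
  Nat.mod_eq_of_lt (by have := Wnat_le (k := k) hi p.2; omega)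

lemma Wnat_lt_i {p : ℕ} (h : Wnat i k p < i) : p < i ∧ Wnat i k p = p := by
  unfold Wnat at *; split_ifs at * <;> omega

lemma Wnat_ge {p : ℕ} (h : i + 2 ≤ Wnat i k p) :
    i + 2*k + 2 < p ∧ Wnat i k p = p - (2*k+1) := by
  unfold Wnat at *; split_ifs at * <;> omega

lemma Wnat_eq_ip1 {p : ℕ} : Wnat i k p = i + 1 ↔
    (i ≤ p ∧ p ≤ i + 2*k + 2 ∧ (p - i) % 2 = 1) := by
  unfold Wnat; split_ifs <;> omega

lemma Wnat_eq_i {p : ℕ} : Wnat i k p = i ↔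
    (i ≤ p ∧ p ≤ i + 2*k + 2 ∧ (p - i) % 2 = 0) := by
  unfold Wnat; split_ifs <;> omega

lemma Wf_IMono (hi : i < n) : IMono i (Wf n i k) := by
  intro a b hab
  unfold isoRel
  simp only [Fin.le_def, Wf_val hi]
  have hab' : (a : ℕ) ≤ b := hab
  unfold Wnat; split_ifs <;> omega

lemma ord_val_mono {M N : ℕ} (β : Fin M →o Fin N) {a b : Fin M}
    (h : (a : ℕ) ≤ (b : ℕ)) : (β a : ℕ) ≤ (β b : ℕ) :=
  β.monotone (Fin.le_def.mpr h)

lemma comp_val (hi : i < n) {M : ℕ} (β : Fin (M + 1) →o Fin (n + 2*k + 2))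
    (a : Fin (M + 1)) : ((Wf n i k ∘ β) a : ℕ) = Wnat i k (β a) :=
  Wf_val hi _

/-- Values at a descent of `Wf ∘ β`. -/
lemma desc_vals (hi : i < n) {M : ℕ} (β : Fin (M + 1) →o Fin (n + 2*k + 2))
    {c : Fin M} (hc : c ∈ Desc (Wf n i k ∘ β)) :
    (i ≤ (β c.castSucc : ℕ) ∧ (β c.castSucc : ℕ) ≤ i + 2*k + 2 ∧
      ((β c.castSucc : ℕ) - i) % 2 = 1) ∧
    (i ≤ (β c.succ : ℕ) ∧ (β c.succ : ℕ) ≤ i + 2*k + 2 ∧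
      ((β c.succ : ℕ) - i) % 2 = 0) ∧
    (β c.castSucc : ℕ) < (β c.succ : ℕ) := by
  have hdrop := drop_vals (IMono_comp (Wf_IMono hi) β) (Fin.castSucc_le_succ c)
    (mem_Desc.mp hc)
  rw [comp_val hi, comp_val hi] at hdrop
  have h1 := Wnat_eq_ip1.mp hdrop.1
  have h2 := Wnat_eq_i.mp hdrop.2
  have h3 : (β c.castSucc : ℕ) ≤ (β c.succ : ℕ) :=
    ord_val_mono β (by simp [Fin.le_def])
  exact ⟨h1, h2, by omega⟩

lemma card_le_arith {N : ℕ} (S : Finset (Fin N)) (c₀ t : ℕ)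
    (h : ∀ p ∈ S, ∃ j, j < t ∧ (p : ℕ) = c₀ + 2*j) : S.card ≤ t := by
  classical
  have hle := Finset.card_le_card_of_injOn (fun p : Fin N => ((p : ℕ) - c₀)/2)
    (s := S) (t := Finset.range t) ?_ ?_
  · simpa using hle
  · intro p hp
    obtain ⟨j, hj, he⟩ := h p hp
    rw [Finset.mem_coe, Finset.mem_range]
    show ((p : ℕ) - c₀)/2 < t
    omega
  · intro p hp q hq he
    obtain ⟨j, hj, hej⟩ := h p (by simpa using hp)
    obtain ⟨j', hj', hej'⟩ := h q (by simpa using hq)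
    apply Fin.ext
    have he' : ((p : ℕ) - c₀)/2 = ((q : ℕ) - c₀)/2 := he
    omega

lemma card_le_arith' {N : ℕ} (S : Finset (Fin N)) (c₀ t j₀ : ℕ) (hj₀ : j₀ < t)
    (h : ∀ p ∈ S, ∃ j, j < t ∧ (p : ℕ) = c₀ + 2*j ∧ j ≠ j₀) : S.card + 1 ≤ t := by
  classical
  have hle := Finset.card_le_card_of_injOn (fun p : Fin N => ((p : ℕ) - c₀)/2)
    (s := S) (t := (Finset.range t).erase j₀) ?_ ?_
  · rw [Finset.card_erase_of_mem (Finset.mem_range.mpr hj₀), Finset.card_range] at hle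
    omega
  · intro p hp
    obtain ⟨j, hj, he, hne⟩ := h p hp
    rw [Finset.mem_coe, Finset.mem_erase, Finset.mem_range]
    refine ⟨?_, ?_⟩ <;> (show _ ; first
      | (show ¬((p : ℕ) - c₀)/2 = j₀; omega)
      | (show ((p : ℕ) - c₀)/2 < t; omega))
  · intro p hp q hq he
    obtain ⟨j, hj, hej, _⟩ := h p (by simpa using hp)
    obtain ⟨j', hj', hej', _⟩ := h q (by simpa using hq)
    apply Fin.ext
    have he' : ((p : ℕ) - c₀)/2 = ((q : ℕ) - c₀)/2 := he
    omega

/-- The last block position of `β`, with its key properties. -/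
lemma aStar_spec (hi : i < n) {M : ℕ} (β : Fin (M + 1) →o Fin (n + 2*k + 2))
    (hfull : Full i (Wf n i k ∘ β)) :
    ∃ astar : Fin (M + 1),
      (i ≤ (β astar : ℕ) ∧ (β astar : ℕ) ≤ i + 2*k + 2) ∧
      (∀ a, i ≤ (β a : ℕ) → (β a : ℕ) ≤ i + 2*k + 2 → a ≤ astar) ∧
      (Htok i (Wf n i k ∘ β) → ((β astar : ℕ) - i) % 2 = 1) ∧
      (¬ Htok i (Wf n i k ∘ β) → ((β astar : ℕ) - i) % 2 = 0) := by
  classical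
  set g := Wf n i k ∘ β with hgdef
  obtain ⟨a0, ha0⟩ := hfull ⟨i + 1, by omega⟩ (by simp)
  have ha0v : Wnat i k (β a0) = i + 1 := by
    rw [← comp_val hi β a0]
    show ((g a0 : ℕ)) = i + 1
    rw [ha0]
  have ha0b := Wnat_eq_ip1.mp ha0v
  set bs := Finset.univ.filter
    (fun a : Fin (M + 1) => i ≤ (β a : ℕ) ∧ (β a : ℕ) ≤ i + 2*k + 2) with hbs
  have hbsne : bs.Nonempty := ⟨a0, by simp [hbs]; omega⟩
  set astar := bs.max' hbsne with hastar
  have hblock : i ≤ (β astar : ℕ) ∧ (β astar : ℕ) ≤ i + 2*k + 2 := by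
    have := bs.max'_mem hbsne
    simpa [hbs] using this
  have hmax : ∀ a, i ≤ (β a : ℕ) → (β a : ℕ) ≤ i + 2*k + 2 → a ≤ astar := by
    intro a h1 h2
    exact bs.le_max' a (by simp [hbs]; omega)
  have hgval : (g astar : ℕ) = i + ((β astar : ℕ) - i) % 2 := by
    rw [comp_val hi]
    unfold Wnat
    split_ifs <;> omega
  refine ⟨astar, hblock, hmax, ?_, ?_⟩
  · intro htok
    by_contra hodd
    have heven : ((β astar : ℕ) - i) % 2 = 0 := by omega
    have hgi : (g astar : ℕ) = i := by omega
    obtain ⟨b, hb1, hb2⟩ := htok astar hgi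
    have hbv : Wnat i k (β b) = i + 1 := by rw [← comp_val hi β b]; exact hb2
    have hbb := Wnat_eq_ip1.mp hbv
    have := hmax b hbb.1 hbb.2.1
    have heq : b = astar := le_antisymm this hb1
    rw [heq] at hbv
    have : (g astar : ℕ) = i + 1 := by rw [comp_val hi]; exact hbv
    omega
  · intro htok
    by_contra hodd
    have hodd' : ((β astar : ℕ) - i) % 2 = 1 := by omega
    apply htok
    intro a ha
    have hav : Wnat i k (β a) = i := by rw [← comp_val hi β a]; exact ha
    have hab := Wnat_eq_i.mp hav
    refine ⟨astar, hmax a hab.1 hab.2.1, ?_⟩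
    omega

/-- Upper bound on the rank via hit odd block positions. -/
lemma rk_upper (hi : i < n) {M : ℕ} (β : Fin (M + 1) →o Fin (n + 2*k + 2))
    (hfull : Full i (Wf n i k ∘ β)) (t : ℕ)
    (hodd : ∀ p : Fin (n + 2*k + 2), (∃ a, β a = p) →
      i ≤ (p : ℕ) → (p : ℕ) ≤ i + 2*k + 2 → ((p : ℕ) - i) % 2 = 1 →
      ∃ j, j < t ∧ (p : ℕ) = (i + 1) + 2*j) :
    rk i (Wf n i k ∘ β) ≤ t := by
  classical
  set g := Wf n i k ∘ β with hgdef
  set S : Finset (Fin (n + 2*k + 2)) := Finset.univ.filter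
    (fun p => (∃ a, β a = p) ∧ i ≤ (p : ℕ) ∧ (p : ℕ) ≤ i + 2*k + 2 ∧
      ((p : ℕ) - i) % 2 = 1) with hS
  have hcard : S.card ≤ t := by
    apply card_le_arith S (i + 1) t
    intro p hp
    rw [hS, Finset.mem_filter] at hp
    obtain ⟨j, hj, he⟩ := hodd p hp.2.1 hp.2.2.1 hp.2.2.2.1 hp.2.2.2.2
    exact ⟨j, hj, he⟩
  obtain ⟨astar, hblock, hmax, hto, _⟩ := aStar_spec hi β hfull
  by_cases htok : Htok i g
  · -- inject descents into S.erase (β astar)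
    have hstar : ((β astar : ℕ) - i) % 2 = 1 := hto htok
    have hstarS : β astar ∈ S := by
      rw [hS, Finset.mem_filter]
      exact ⟨Finset.mem_univ _, ⟨astar, rfl⟩, hblock.1, hblock.2, hstar⟩
    have hlt : ∀ (c : Fin M) (_ : c ∈ Desc g), (β c.castSucc : ℕ) < (β astar : ℕ) := by
      intro c hc
      obtain ⟨h1, h2, h3⟩ := desc_vals hi β hc
      have hsle : c.succ ≤ astar := hmax c.succ h2.1 h2.2.1
      have := ord_val_mono β (Fin.le_def.mp hsle)
      omega
    have hinj : dcnt g ≤ (S.erase (β astar)).card := by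
      calc (Desc g).card = (Desc g).attach.card := Finset.card_attach.symm
        _ ≤ (S.erase (β astar)).card := by
            apply Finset.card_le_card_of_injOn (fun c => β c.1.castSucc)
            · intro c _
              obtain ⟨h1, h2, h3⟩ := desc_vals hi β c.2
              refine Finset.mem_erase.mpr ⟨?_, ?_⟩
              · intro he
                have := hlt c.1 c.2
                rw [show β c.1.castSucc = β astar from he] at this
                omega
              · rw [hS, Finset.mem_filter]
                exact ⟨Finset.mem_univ _, ⟨_, rfl⟩, h1.1, h1.2.1, h1.2.2⟩
            · intro a _ b _ hab
              have hab' : β a.1.castSucc = β b.1.castSucc := hab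
              by_contra hne
              have hne' : a.1 ≠ b.1 := fun h => hne (Subtype.ext h)
              have key : ∀ (x y : {c // c ∈ Desc g}), x.1 < y.1 →
                  (β x.1.castSucc : ℕ) < (β y.1.castSucc : ℕ) := by
                intro x y hxy
                obtain ⟨hx1, hx2, hx3⟩ := desc_vals hi β x.2
                obtain ⟨hy1, hy2, hy3⟩ := desc_vals hi β y.2
                have : (β x.1.succ : ℕ) ≤ (β y.1.castSucc : ℕ) := by
                  apply ord_val_mono
                  simp only [Fin.val_succ, Fin.coe_castSucc]
                  exact Fin.lt_def.mp hxy
                omega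
              rcases lt_trichotomy a.1 b.1 with h | h | h
              · have := key a b h; rw [hab'] at this; omega
              · exact hne' h
              · have := key b a h; rw [hab'] at this; omega
    have hc1 : (S.erase (β astar)).card = S.card - 1 :=
      Finset.card_erase_of_mem hstarS
    have hpos : 0 < S.card := Finset.card_pos.mpr ⟨_, hstarS⟩
    rw [rk, if_pos htok]
    show dcnt g + 1 ≤ t
    omega
  · rw [rk, if_neg htok]
    calc dcnt g = (Desc g).attach.card := Finset.card_attach.symm
      _ ≤ S.card := by
          apply Finset.card_le_card_of_injOn (fun c => β c.1.castSucc)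
          · intro c _
            obtain ⟨h1, h2, h3⟩ := desc_vals hi β c.2
            rw [hS, Finset.mem_coe, Finset.mem_filter]
            exact ⟨Finset.mem_univ _, ⟨_, rfl⟩, h1.1, h1.2.1, h1.2.2⟩
          · intro a _ b _ hab
            have hab' : β a.1.castSucc = β b.1.castSucc := hab
            by_contra hne
            have hne' : a.1 ≠ b.1 := fun h => hne (Subtype.ext h)
            have key : ∀ (x y : {c // c ∈ Desc g}), x.1 < y.1 →
                (β x.1.castSucc : ℕ) < (β y.1.castSucc : ℕ) := by
              intro x y hxy
              obtain ⟨hx1, hx2, hx3⟩ := desc_vals hi β x.2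
              obtain ⟨hy1, hy2, hy3⟩ := desc_vals hi β y.2
              have : (β x.1.succ : ℕ) ≤ (β y.1.castSucc : ℕ) := by
                apply ord_val_mono
                simp only [Fin.val_succ, Fin.coe_castSucc]
                exact Fin.lt_def.mp hxy
              omega
            rcases lt_trichotomy a.1 b.1 with h | h | h
            · have := key a b h; rw [hab'] at this; omega
            · exact hne' h
            · have := key b a h; rw [hab'] at this; omega
      _ ≤ t := hcard

/-- Odd variant with an excluded index. -/
lemma rk_upper_excl (hi : i < n) {M : ℕ} (β : Fin (M + 1) →o Fin (n + 2*k + 2))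
    (hfull : Full i (Wf n i k ∘ β)) (t j₀ : ℕ) (hj₀ : j₀ < t)
    (hodd : ∀ p : Fin (n + 2*k + 2), (∃ a, β a = p) →
      i ≤ (p : ℕ) → (p : ℕ) ≤ i + 2*k + 2 → ((p : ℕ) - i) % 2 = 1 →
      ∃ j, j < t ∧ (p : ℕ) = (i + 1) + 2*j ∧ j ≠ j₀) :
    rk i (Wf n i k ∘ β) + 1 ≤ t := by
  classical
  set g := Wf n i k ∘ β with hgdef
  set S : Finset (Fin (n + 2*k + 2)) := Finset.univ.filter
    (fun p => (∃ a, β a = p) ∧ i ≤ (p : ℕ) ∧ (p : ℕ) ≤ i + 2*k + 2 ∧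
      ((p : ℕ) - i) % 2 = 1) with hS
  have hcard : S.card + 1 ≤ t := by
    apply card_le_arith' S (i + 1) t j₀ hj₀
    intro p hp
    rw [hS, Finset.mem_filter] at hp
    exact hodd p hp.2.1 hp.2.2.1 hp.2.2.2.1 hp.2.2.2.2
  obtain ⟨astar, hblock, hmax, hto, _⟩ := aStar_spec hi β hfull
  by_cases htok : Htok i g
  · have hstar : ((β astar : ℕ) - i) % 2 = 1 := hto htok
    have hstarS : β astar ∈ S := by
      rw [hS, Finset.mem_filter]
      exact ⟨Finset.mem_univ _, ⟨astar, rfl⟩, hblock.1, hblock.2, hstar⟩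
    have hlt : ∀ (c : Fin M) (_ : c ∈ Desc g), (β c.castSucc : ℕ) < (β astar : ℕ) := by
      intro c hc
      obtain ⟨h1, h2, h3⟩ := desc_vals hi β hc
      have hsle : c.succ ≤ astar := hmax c.succ h2.1 h2.2.1
      have := ord_val_mono β (Fin.le_def.mp hsle)
      omega
    have hinj : dcnt g ≤ (S.erase (β astar)).card := by
      calc (Desc g).card = (Desc g).attach.card := Finset.card_attach.symm
        _ ≤ (S.erase (β astar)).card := by
            apply Finset.card_le_card_of_injOn (fun c => β c.1.castSucc)
            · intro c _
              obtain ⟨h1, h2, h3⟩ := desc_vals hi β c.2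
              refine Finset.mem_erase.mpr ⟨?_, ?_⟩
              · intro he
                have := hlt c.1 c.2
                rw [show β c.1.castSucc = β astar from he] at this
                omega
              · rw [hS, Finset.mem_filter]
                exact ⟨Finset.mem_univ _, ⟨_, rfl⟩, h1.1, h1.2.1, h1.2.2⟩
            · intro a _ b _ hab
              have hab' : β a.1.castSucc = β b.1.castSucc := hab
              by_contra hne
              have hne' : a.1 ≠ b.1 := fun h => hne (Subtype.ext h)
              have key : ∀ (x y : {c // c ∈ Desc g}), x.1 < y.1 →
                  (β x.1.castSucc : ℕ) < (β y.1.castSucc : ℕ) := by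
                intro x y hxy
                obtain ⟨hx1, hx2, hx3⟩ := desc_vals hi β x.2
                obtain ⟨hy1, hy2, hy3⟩ := desc_vals hi β y.2
                have : (β x.1.succ : ℕ) ≤ (β y.1.castSucc : ℕ) := by
                  apply ord_val_mono
                  simp only [Fin.val_succ, Fin.coe_castSucc]
                  exact Fin.lt_def.mp hxy
                omega
              rcases lt_trichotomy a.1 b.1 with h | h | h
              · have := key a b h; rw [hab'] at this; omega
              · exact hne' h
              · have := key b a h; rw [hab'] at this; omega
    have hc1 : (S.erase (β astar)).card = S.card - 1 :=
      Finset.card_erase_of_mem hstarS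
    have hpos : 0 < S.card := Finset.card_pos.mpr ⟨_, hstarS⟩
    rw [rk, if_pos htok]
    show dcnt g + 1 + 1 ≤ t
    omega
  · rw [rk, if_neg htok]
    have hd : dcnt g ≤ S.card := by
      calc dcnt g = (Desc g).attach.card := Finset.card_attach.symm
        _ ≤ S.card := by
            apply Finset.card_le_card_of_injOn (fun c => β c.1.castSucc)
            · intro c _
              obtain ⟨h1, h2, h3⟩ := desc_vals hi β c.2
              rw [hS, Finset.mem_coe, Finset.mem_filter]
              exact ⟨Finset.mem_univ _, ⟨_, rfl⟩, h1.1, h1.2.1, h1.2.2⟩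
            · intro a _ b _ hab
              have hab' : β a.1.castSucc = β b.1.castSucc := hab
              by_contra hne
              have hne' : a.1 ≠ b.1 := fun h => hne (Subtype.ext h)
              have key : ∀ (x y : {c // c ∈ Desc g}), x.1 < y.1 →
                  (β x.1.castSucc : ℕ) < (β y.1.castSucc : ℕ) := by
                intro x y hxy
                obtain ⟨hx1, hx2, hx3⟩ := desc_vals hi β x.2
                obtain ⟨hy1, hy2, hy3⟩ := desc_vals hi β y.2
                have : (β x.1.succ : ℕ) ≤ (β y.1.castSucc : ℕ) := by
                  apply ord_val_mono
                  simp only [Fin.val_succ, Fin.coe_castSucc]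
                  exact Fin.lt_def.mp hxy
                omega
              rcases lt_trichotomy a.1 b.1 with h | h | h
              · have := key a b h; rw [hab'] at this; omega
              · exact hne' h
              · have := key b a h; rw [hab'] at this; omega
    omega

/-- Even-injection bound with an excluded index. -/
lemma dcnt_even_excl (hi : i < n) {M : ℕ} (β : Fin (M + 1) →o Fin (n + 2*k + 2))
    (t j₀ : ℕ) (hj₀ : j₀ < t) (B : ℕ)
    (hub : ∀ (c : Fin M), c ∈ Desc (Wf n i k ∘ β) → (β c.succ : ℕ) ≤ B)
    (heven : ∀ p : Fin (n + 2*k + 2), (∃ a, β a = p) →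
      i + 2 ≤ (p : ℕ) → (p : ℕ) ≤ B → ((p : ℕ) - i) % 2 = 0 →
      ∃ j, j < t ∧ (p : ℕ) = (i + 2) + 2*j ∧ j ≠ j₀) :
    dcnt (Wf n i k ∘ β) + 1 ≤ t := by
  classical
  set g := Wf n i k ∘ β with hgdef
  set S : Finset (Fin (n + 2*k + 2)) := Finset.univ.filter
    (fun p => (∃ a, β a = p) ∧ i + 2 ≤ (p : ℕ) ∧ (p : ℕ) ≤ B ∧
      ((p : ℕ) - i) % 2 = 0) with hS
  have hcard : S.card + 1 ≤ t := by
    apply card_le_arith' S (i + 2) t j₀ hj₀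
    intro p hp
    rw [hS, Finset.mem_filter] at hp
    exact heven p hp.2.1 hp.2.2.1 hp.2.2.2.1 hp.2.2.2.2
  have hd : dcnt g ≤ S.card := by
    calc dcnt g = (Desc g).attach.card := Finset.card_attach.symm
      _ ≤ S.card := by
          apply Finset.card_le_card_of_injOn (fun c => β c.1.succ)
          · intro c _
            obtain ⟨h1, h2, h3⟩ := desc_vals hi β c.2
            rw [hS, Finset.mem_coe, Finset.mem_filter]
            beta_reduce
            refine ⟨Finset.mem_univ _, ⟨_, rfl⟩, by omega, hub c.1 c.2, h2.2.2⟩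
          · intro a _ b _ hab
            have hab' : β a.1.succ = β b.1.succ := hab
            by_contra hne
            have hne' : a.1 ≠ b.1 := fun h => hne (Subtype.ext h)
            have key : ∀ (x y : {c // c ∈ Desc g}), x.1 < y.1 →
                (β x.1.succ : ℕ) < (β y.1.succ : ℕ) := by
              intro x y hxy
              obtain ⟨hx1, hx2, hx3⟩ := desc_vals hi β x.2
              obtain ⟨hy1, hy2, hy3⟩ := desc_vals hi β y.2
              have : (β x.1.succ : ℕ) ≤ (β y.1.castSucc : ℕ) := by
                apply ord_val_mono
                simp only [Fin.val_succ, Fin.coe_castSucc]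
                exact Fin.lt_def.mp hxy
              omega
            rcases lt_trichotomy a.1 b.1 with h | h | h
            · have := key a b h; rw [hab'] at this; omega
            · exact hne' h
            · have := key b a h; rw [hab'] at this; omega
  omega

/-- A pair of adjacent hit positions with a value drop produces a descent. -/
lemma hit_pair_descent (hi : i < n) {M : ℕ} (β : Fin (M + 1) →o Fin (n + 2*k + 2))
    {p : ℕ} (hp : ∃ a : Fin (M + 1), (β a : ℕ) = p)
    (hp1 : ∃ a : Fin (M + 1), (β a : ℕ) = p + 1)
    (hv1 : Wnat i k p = i + 1) (hv0 : Wnat i k (p + 1) = i) :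
    ∃ c : Fin M, c ∈ Desc (Wf n i k ∘ β) ∧ (β c.succ : ℕ) = p + 1 := by
  classical
  obtain ⟨a1, ha1⟩ := hp1
  set sp := Finset.univ.filter (fun a : Fin (M + 1) => (β a : ℕ) = p) with hsp
  have hspne : sp.Nonempty := by
    obtain ⟨a, ha⟩ := hp
    exact ⟨a, by simp [hsp, ha]⟩
  set ce := sp.max' hspne with hce
  have hcev : (β ce : ℕ) = p := by
    have := sp.max'_mem hspne
    simpa [hsp] using this
  have hcelt : (ce : ℕ) < (a1 : ℕ) := by
    by_contra hcon
    push_neg at hcon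
    have := ord_val_mono β hcon
    omega
  have hltM : (ce : ℕ) < M := by
    have := a1.2
    omega
  set c : Fin M := ⟨(ce : ℕ), hltM⟩ with hc
  have hcs : c.castSucc = ce := by
    apply Fin.ext
    simp [hc]
  have hsuccle : ((c.succ : Fin (M + 1)) : ℕ) ≤ (a1 : ℕ) := by
    simp [hc, Fin.val_succ]
    omega
  have hv : (β c.succ : ℕ) = p + 1 := by
    have hge : p ≤ (β c.succ : ℕ) := by
      rw [← hcev, ← hcs]
      exact ord_val_mono β (by simp [Fin.val_succ, Fin.coe_castSucc])
    have hle : (β c.succ : ℕ) ≤ p + 1 := by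
      rw [← ha1]
      exact ord_val_mono β hsuccle
    rcases Nat.lt_or_ge (β c.succ : ℕ) (p + 1) with h | h
    · exfalso
      have heq : (β c.succ : ℕ) = p := by omega
      have hmem : c.succ ∈ sp := by simp [hsp, heq]
      have := sp.le_max' c.succ hmem
      rw [← hce] at this
      have h2 := Fin.le_def.mp this
      simp [hc, Fin.val_succ] at h2
    · omega
  refine ⟨c, ?_, hv⟩
  rw [mem_Desc]
  rw [Fin.lt_def, comp_val hi, comp_val hi, hcs, hcev, hv, hv0, hv1]
  omega

/-- A non-horn simplex mapped by `W` is full of rank exactly `k+1` (lower bound part). -/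
lemma B3 (hi : i < n) {M : ℕ} (β : Fin (M + 1) →o Fin (n + 2*k + 2))
    (hcov : ∀ p : Fin (n + 2*k + 2), (p : ℕ) ≠ i → (p : ℕ) ≠ i + 2*k + 2 →
      ∃ a, β a = p) :
    Full i (Wf n i k ∘ β) ∧ k + 1 ≤ rk i (Wf n i k ∘ β) := by
  classical
  set g := Wf n i k ∘ β with hgdef
  have hfull : Full i g := by
    intro v hv
    rcases Nat.lt_or_ge (v : ℕ) i with h | h
    · obtain ⟨a, ha⟩ := hcov ⟨(v : ℕ), by omega⟩ (by simp; omega) (by simp; omega)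
      refine ⟨a, ?_⟩
      apply Fin.ext
      rw [comp_val hi, ha]
      show Wnat i k (v : ℕ) = (v : ℕ)
      unfold Wnat
      split_ifs <;> omega
    · rcases Nat.lt_or_ge (v : ℕ) (i + 2) with h2 | h2
      · -- v = i + 1
        have hv1 : (v : ℕ) = i + 1 := by omega
        obtain ⟨a, ha⟩ := hcov ⟨i + 1, by omega⟩ (by simp) (by simp; omega)
        refine ⟨a, ?_⟩
        apply Fin.ext
        rw [comp_val hi, ha]
        show Wnat i k (i + 1) = (v : ℕ)
        rw [Wnat_eq_ip1.mpr (by omega)]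
        omega
      · -- v ≥ i + 2, position v + 2k + 1
        have hvn : (v : ℕ) ≤ n := by omega
        obtain ⟨a, ha⟩ := hcov ⟨(v : ℕ) + 2*k + 1, by omega⟩ (by simp; omega)
          (by simp; omega)
        refine ⟨a, ?_⟩
        apply Fin.ext
        rw [comp_val hi, ha]
        show Wnat i k ((v : ℕ) + 2*k + 1) = (v : ℕ)
        unfold Wnat
        split_ifs <;> omega
  refine ⟨hfull, ?_⟩
  obtain ⟨astar, hblock, hmax, _, hnto⟩ := aStar_spec hi β hfull
  have key : ∀ j, j < k + 1 → (j < k ∨ ¬ Htok i g) →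
      ∃ c : Fin M, c ∈ Desc g ∧ (β c.succ : ℕ) = i + 2*j + 2 := by
    intro j hj hcase
    have hp : ∃ a : Fin (M + 1), (β a : ℕ) = i + 2*j + 1 := by
      obtain ⟨a, ha⟩ := hcov ⟨i + 2*j + 1, by omega⟩ (by simp; omega) (by simp; omega)
      exact ⟨a, by rw [ha]⟩
    have hp1 : ∃ a : Fin (M + 1), (β a : ℕ) = i + 2*j + 2 := by
      rcases Nat.lt_or_ge j k with hjk | hjk
      · obtain ⟨a, ha⟩ := hcov ⟨i + 2*j + 2, by omega⟩ (by simp; omega) (by simp; omega)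
        exact ⟨a, by rw [ha]⟩
      · -- j = k, use astar
        have hje : j = k := by omega
        have htok : ¬ Htok i g := by
          rcases hcase with hc | hc
          · omega
          · exact hc
        have hstar0 : ((β astar : ℕ) - i) % 2 = 0 := hnto htok
        obtain ⟨a1, ha1⟩ := hp
        have ha1b : a1 ≤ astar := hmax a1 (by rw [ha1]; omega) (by rw [ha1]; omega)
        have hle : (β a1 : ℕ) ≤ (β astar : ℕ) := ord_val_mono β (Fin.le_def.mp ha1b)
        have h6 := hblock.1
        have h7 := hblock.2
        refine ⟨astar, ?_⟩
        omega
    have hv1 : Wnat i k (i + 2*j + 1) = i + 1 := by rw [Wnat_eq_ip1]; omega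
    have hv0 : Wnat i k (i + 2*j + 1 + 1) = i := by rw [Wnat_eq_i]; omega
    obtain ⟨c, hc1, hc2⟩ := hit_pair_descent hi β hp hp1 hv1 hv0
    exact ⟨c, hc1, by omega⟩
  by_cases htok : Htok i g
  · -- k ≤ dcnt
    have key' : ∀ j : ℕ, j ∈ Finset.range k →
        ∃ c : Fin M, c ∈ Desc g ∧ (β c.succ : ℕ) = i + 2*j + 2 := by
      intro j hj
      rw [Finset.mem_range] at hj
      exact key j (by omega) (Or.inl hj)
    choose ψ h1 h2 using key'
    have hcard : k ≤ dcnt g := by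
      calc k = (Finset.range k).card := (Finset.card_range k).symm
        _ = (Finset.range k).attach.card := Finset.card_attach.symm
        _ ≤ (Desc g).card := by
            apply Finset.card_le_card_of_injOn (fun j => ψ j.1 j.2)
            · intro j _; exact h1 j.1 j.2
            · intro a _ b _ hab
              have hab' : ψ a.1 a.2 = ψ b.1 b.2 := hab
              have := h2 a.1 a.2
              rw [hab', h2 b.1 b.2] at this
              exact Subtype.ext (by omega)
    rw [rk, if_pos htok]
    show dcnt g + 1 ≥ k + 1
    omega
  · have key' : ∀ j : ℕ, j ∈ Finset.range (k + 1) →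
        ∃ c : Fin M, c ∈ Desc g ∧ (β c.succ : ℕ) = i + 2*j + 2 := by
      intro j hj
      rw [Finset.mem_range] at hj
      exact key j hj (Or.inr htok)
    choose ψ h1 h2 using key'
    have hcard : k + 1 ≤ dcnt g := by
      calc k + 1 = (Finset.range (k + 1)).card := (Finset.card_range _).symm
        _ = (Finset.range (k + 1)).attach.card := Finset.card_attach.symm
        _ ≤ (Desc g).card := by
            apply Finset.card_le_card_of_injOn (fun j => ψ j.1 j.2)
            · intro j _; exact h1 j.1 j.2
            · intro a _ b _ hab
              have hab' : ψ a.1 a.2 = ψ b.1 b.2 := hab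
              have := h2 a.1 a.2
              rw [hab', h2 b.1 b.2] at this
              exact Subtype.ext (by omega)
    rw [rk, if_neg htok]
    exact hcard

/-- Any composite with `W` lies in stage `k+1`. -/
lemma B1 (hi : i < n) {M : ℕ} (β : Fin (M + 1) →o Fin (n + 2*k + 2)) :
    pred i (k + 1) (Wf n i k ∘ β) := by
  by_cases hm : Miss i (Wf n i k ∘ β)
  · exact Or.inl hm
  · have hfull : Full i (Wf n i k ∘ β) := not_miss_iff.mp hm
    refine Or.inr ⟨hfull, ?_⟩
    apply rk_upper hi β hfull (k + 1)
    intro p _ h1 h2 h3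
    exact ⟨((p : ℕ) - i - 1)/2, by omega, by omega⟩

/-- A horn simplex composed with `W` lies in stage `k`. -/
lemma B2 (hi : i < n) {M : ℕ} (β : Fin (M + 1) →o Fin (n + 2*k + 2))
    (v : Fin (n + 2*k + 2)) (hvi : (v : ℕ) ≠ i) (hvo : (v : ℕ) ≠ i + 2*k + 2)
    (hmiss : ∀ a, β a ≠ v) : pred i k (Wf n i k ∘ β) := by
  classical
  by_cases hm : Miss i (Wf n i k ∘ β)
  · exact Or.inl hm
  have hfull : Full i (Wf n i k ∘ β) := not_miss_iff.mp hm
  have hmiss' : ∀ a, (β a : ℕ) ≠ (v : ℕ) := by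
    intro a h
    exact hmiss a (Fin.ext h)
  have hvlt := v.2
  rcases Nat.lt_or_ge (v : ℕ) i with hA | hA
  · -- impossible: value v would be missed
    exfalso
    obtain ⟨a, ha⟩ := hfull ⟨(v : ℕ), by omega⟩ (by simp; omega)
    have hav : Wnat i k (β a) = (v : ℕ) := by
      have := congrArg Fin.val ha
      rw [comp_val hi] at this
      exact this
    have := Wnat_lt_i (by omega : Wnat i k (β a) < i)
    exact hmiss' a (by omega)
  rcases Nat.lt_or_ge (i + 2*k + 2) (v : ℕ) with hB2 | hB2
  · exfalso
    have hw : i + 2 ≤ (v : ℕ) - (2*k + 1) ∧ (v : ℕ) - (2*k + 1) ≤ n := by omega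
    obtain ⟨a, ha⟩ := hfull ⟨(v : ℕ) - (2*k + 1), by omega⟩ (by simp; omega)
    have hav : Wnat i k (β a) = (v : ℕ) - (2*k + 1) := by
      have := congrArg Fin.val ha
      rw [comp_val hi] at this
      exact this
    have := Wnat_ge (by omega : i + 2 ≤ Wnat i k (β a))
    exact hmiss' a (by omega)
  -- v is an interior block position
  have hvblock : i < (v : ℕ) ∧ (v : ℕ) < i + 2*k + 2 := by omega
  rcases Nat.mod_two_eq_zero_or_one ((v : ℕ) - i) with hpar | hpar
  · -- even interior position
    have hv2 : i + 2 ≤ (v : ℕ) ∧ (v : ℕ) ≤ i + 2*k := by omega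
    have hk1 : 1 ≤ k := by omega
    by_cases htok : Htok i (Wf n i k ∘ β)
    · obtain ⟨astar, hblock, hmax, hto, _⟩ := aStar_spec hi β hfull
      have hstar : ((β astar : ℕ) - i) % 2 = 1 := hto htok
      have hub : ∀ (c : Fin M), c ∈ Desc (Wf n i k ∘ β) →
          (β c.succ : ℕ) ≤ i + 2*k + 1 := by
        intro c hc
        obtain ⟨h1, h2, _⟩ := desc_vals hi β hc
        have hsle : c.succ ≤ astar := hmax c.succ h2.1 h2.2.1
        have := ord_val_mono β (Fin.le_def.mp hsle)
        have hbs := hblock.2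
        omega
      have hd := dcnt_even_excl hi β k (((v : ℕ) - i - 2)/2) (by omega)
        (i + 2*k + 1) hub ?_
      · refine Or.inr ⟨hfull, ?_⟩
        rw [rk, if_pos htok]
        show dcnt (Wf n i k ∘ β) + 1 ≤ k
        omega
      · intro p hhit h1 h2 h3
        obtain ⟨a, ha⟩ := hhit
        have hpv : (p : ℕ) ≠ (v : ℕ) := by
          intro he
          exact hmiss' a (by rw [ha]; omega)
        exact ⟨((p : ℕ) - i - 2)/2, by omega, by omega, by omega⟩
    · have hub : ∀ (c : Fin M), c ∈ Desc (Wf n i k ∘ β) →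
          (β c.succ : ℕ) ≤ i + 2*k + 2 := by
        intro c hc
        obtain ⟨_, h2, _⟩ := desc_vals hi β hc
        omega
      have hd := dcnt_even_excl hi β (k + 1) (((v : ℕ) - i - 2)/2) (by omega)
        (i + 2*k + 2) hub ?_
      · refine Or.inr ⟨hfull, ?_⟩
        rw [rk, if_neg htok]
        show dcnt (Wf n i k ∘ β) ≤ k
        omega
      · intro p hhit h1 h2 h3
        obtain ⟨a, ha⟩ := hhit
        have hpv : (p : ℕ) ≠ (v : ℕ) := by
          intro he
          exact hmiss' a (by rw [ha]; omega)
        exact ⟨((p : ℕ) - i - 2)/2, by omega, by omega, by omega⟩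
  · -- odd interior position
    have hd := rk_upper_excl hi β hfull (k + 1) (((v : ℕ) - i - 1)/2) (by omega) ?_
    · exact Or.inr ⟨hfull, by omega⟩
    · intro p hhit h1 h2 h3
      obtain ⟨a, ha⟩ := hhit
      have hpv : (p : ℕ) ≠ (v : ℕ) := by
        intro he
        exact hmiss' a (by rw [ha]; omega)
      exact ⟨((p : ℕ) - i - 1)/2, by omega, by omega, by omega⟩

/-! ### The canonical lift -/

/-- Number of descents strictly before position `a`. -/
def Dlt {n M : ℕ} (g : Fin (M + 1) → Fin (n + 1)) (a : Fin (M + 1)) : ℕ :=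
  (Finset.univ.filter (fun c : Fin M => c.succ ≤ a ∧ g c.succ < g c.castSucc)).card

lemma Dlt_le_dcnt {M : ℕ} (g : Fin (M + 1) → Fin (n + 1)) (a : Fin (M + 1)) :
    Dlt g a ≤ dcnt g := by
  apply Finset.card_le_card
  intro c hc
  rw [Finset.mem_filter] at hc
  rw [mem_Desc]
  exact hc.2.2

lemma Dlt_succ {M : ℕ} (g : Fin (M + 1) → Fin (n + 1)) (c : Fin M) :
    Dlt g c.succ = Dlt g c.castSucc + (if g c.succ < g c.castSucc then 1 else 0) := by
  classical
  by_cases hd : g c.succ < g c.castSucc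
  · rw [if_pos hd]
    unfold Dlt
    have hset : Finset.univ.filter
        (fun d : Fin M => d.succ ≤ c.succ ∧ g d.succ < g d.castSucc) =
        insert c (Finset.univ.filter
          (fun d : Fin M => d.succ ≤ c.castSucc ∧ g d.succ < g d.castSucc)) := by
      ext d
      simp only [Finset.mem_filter, Finset.mem_insert, Finset.mem_univ, true_and]
      constructor
      · rintro ⟨h1, h2⟩
        have h1' : (d : ℕ) + 1 ≤ (c : ℕ) + 1 := by
          have := Fin.le_def.mp h1
          simpa [Fin.val_succ] using this
        rcases Nat.lt_or_ge (d : ℕ) (c : ℕ) with h | h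
        · right
          refine ⟨?_, h2⟩
          rw [Fin.le_def]
          simp [Fin.val_succ, Fin.coe_castSucc]
          omega
        · left
          exact Fin.ext (by omega)
      · rintro (rfl | ⟨h1, h2⟩)
        · exact ⟨le_rfl, hd⟩
        · refine ⟨?_, h2⟩
          rw [Fin.le_def] at h1 ⊢
          simp [Fin.val_succ, Fin.coe_castSucc] at h1 ⊢
          omega
    rw [hset, Finset.card_insert_of_notMem]
    rw [Finset.mem_filter]
    rintro ⟨_, h1, _⟩
    rw [Fin.le_def] at h1
    simp [Fin.val_succ, Fin.coe_castSucc] at h1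
  · rw [if_neg hd, Nat.add_zero]
    unfold Dlt
    congr 1
    ext d
    simp only [Finset.mem_filter, Finset.mem_univ, true_and]
    constructor
    · rintro ⟨h1, h2⟩
      refine ⟨?_, h2⟩
      have h1' := Fin.le_def.mp h1
      simp only [Fin.val_succ] at h1'
      have hne : d ≠ c := by
        rintro rfl
        exact hd h2
      rw [Fin.le_def]
      simp only [Fin.val_succ, Fin.coe_castSucc]
      have : (d : ℕ) ≠ (c : ℕ) := fun h => hne (Fin.ext h)
      omega
    · rintro ⟨h1, h2⟩
      refine ⟨?_, h2⟩
      have h1' := Fin.le_def.mp h1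
      simp only [Fin.val_succ, Fin.coe_castSucc] at h1'
      rw [Fin.le_def]
      simp only [Fin.val_succ]
      omega

/-- The canonical lift of a rank-`k+1` word through `W`, at the level of values. -/
def liftNat (i k : ℕ) {n M : ℕ} (g : Fin (M + 1) → Fin (n + 1)) (a : Fin (M + 1)) : ℕ :=
  if (g a : ℕ) < i then (g a : ℕ)
  else if (g a : ℕ) ≤ i + 1 then i + 2*(Dlt g a) + ((g a : ℕ) - i)
  else (g a : ℕ) + 2*k + 1

lemma dcnt_facts {M : ℕ} {g : Fin (M + 1) → Fin (n + 1)}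
    (hrk : rk i g = k + 1) :
    (Htok i g → dcnt g = k) ∧ (¬ Htok i g → dcnt g = k + 1) := by
  classical
  constructor
  · intro h; rw [rk, if_pos h] at hrk; omega
  · intro h; rw [rk, if_neg h] at hrk; omega

/-- The sharp bound on block values of the canonical lift. -/
lemma lift_sharp {M : ℕ} {g : Fin (M + 1) → Fin (n + 1)} (hg : IMono i g)
    (hrk : rk i g = k + 1) (a : Fin (M + 1))
    (h2 : (g a : ℕ) ≤ i + 1) : 2*(Dlt g a) + ((g a : ℕ) - i) ≤ 2*k + 2 := by
  classical
  have hD := Dlt_le_dcnt g a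
  have hdc : dcnt g ≤ k + 1 := by
    by_cases h : Htok i g
    · have := (dcnt_facts hrk).1 h; omega
    · have := (dcnt_facts hrk).2 h; omega
  rcases Nat.lt_or_ge (Dlt g a) (k + 1) with h | h
  · omega
  · have hDa : Dlt g a = k + 1 := by omega
    have hdce : dcnt g = k + 1 := by omega
    have htok : ¬ Htok i g := by
      intro htok
      have := (dcnt_facts hrk).1 htok
      omega
    rcases Nat.lt_or_ge ((g a : ℕ)) (i + 1) with hga | hga
    · omega
    · -- g a = i + 1; find a descent after a, contradiction
      exfalso
      have hga' : (g a : ℕ) = i + 1 := by omega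
      obtain ⟨a₀, ha₀, hno⟩ := htok_of_not htok
      have hlt : a < a₀ := by
        by_contra hcon
        push_neg at hcon
        exact hno a hcon hga'
      obtain ⟨δ, hδ1, hδ2, hδ3⟩ := descent_between g a a₀ (le_of_lt hlt)
        (by rw [Fin.lt_def]; omega)
      have hδnot : δ ∉ Finset.univ.filter
          (fun c : Fin M => c.succ ≤ a ∧ g c.succ < g c.castSucc) := by
        rw [Finset.mem_filter]
        rintro ⟨_, hle, _⟩
        have hx := Fin.le_def.mp hδ1
        have hy := Fin.le_def.mp hle
        simp only [Fin.coe_castSucc, Fin.val_succ] at hx hy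
        omega
      have hins : insert δ (Finset.univ.filter
          (fun c : Fin M => c.succ ≤ a ∧ g c.succ < g c.castSucc)) ⊆ Desc g := by
        intro d hd
        rw [Finset.mem_insert] at hd
        rcases hd with rfl | hd
        · exact mem_Desc.mpr hδ3
        · rw [Finset.mem_filter] at hd
          exact mem_Desc.mpr hd.2.2
      have := Finset.card_le_card hins
      rw [Finset.card_insert_of_notMem hδnot] at this
      unfold Dlt at hDa
      unfold dcnt at hdce
      omega

variable {M : ℕ} {g : Fin (M + 1) → Fin (n + 1)}

lemma liftNat_lt (hi : i < n) (hg : IMono i g) (hrk : rk i g = k + 1)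
    (a : Fin (M + 1)) : liftNat i k g a < n + 2*k + 2 := by
  have hga := (g a).2
  have hsh := lift_sharp hg hrk a
  unfold liftNat
  split_ifs with h1 h2
  · omega
  · have := hsh (by omega)
    omega
  · omega

lemma liftNat_wnat (hi : i < n) (hg : IMono i g) (hrk : rk i g = k + 1)
    (a : Fin (M + 1)) : Wnat i k (liftNat i k g a) = (g a : ℕ) := by
  have hsh := lift_sharp hg hrk a
  unfold liftNat
  split_ifs with h1 h2
  · unfold Wnat; split_ifs <;> omega
  · have := hsh (by omega)
    unfold Wnat; split_ifs <;> omega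
  · unfold Wnat; split_ifs <;> omega

lemma liftNat_mono_step (hg : IMono i g) (hrk : rk i g = k + 1) (c : Fin M) :
    liftNat i k g c.castSucc ≤ liftNat i k g c.succ := by
  have hrel := hg c.castSucc c.succ (Fin.castSucc_le_succ c)
  have hDs := Dlt_succ g c
  unfold isoRel at hrel
  rw [Fin.le_def] at hrel
  by_cases hd : g c.succ < g c.castSucc
  · rw [if_pos hd] at hDs
    have hd' := Fin.lt_def.mp hd
    have hxy : (g c.castSucc : ℕ) = i + 1 ∧ (g c.succ : ℕ) = i := by
      rcases hrel with h | h
      · omega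
      · exact h
    unfold liftNat
    split_ifs <;> omega
  · rw [if_neg hd, Nat.add_zero] at hDs
    have hxy : (g c.castSucc : ℕ) ≤ (g c.succ : ℕ) := by
      have := Fin.le_def.mp (not_lt.mp hd)
      omega
    have hsh := lift_sharp hg hrk c.castSucc
    rcases Nat.lt_or_ge (i + 1) (g c.castSucc : ℕ) with hx | hx
    · unfold liftNat
      split_ifs <;> omega
    · have := hsh (by omega)
      unfold liftNat
      split_ifs <;> omega

/-- Intermediate value theorem for unit-step functions on `Fin`. -/
lemma ivt {M : ℕ} (h : Fin (M + 1) → ℕ) :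
    ∀ (a₁ a₂ : Fin (M + 1)), a₁ ≤ a₂ →
    (∀ c : Fin M, a₁ ≤ c.castSucc → c.succ ≤ a₂ → h c.succ ≤ h c.castSucc + 1) →
    ∀ e, h a₁ ≤ e → e ≤ h a₂ → ∃ a, a₁ ≤ a ∧ a ≤ a₂ ∧ h a = e := by
  suffices H : ∀ (N : ℕ) (a₁ a₂ : Fin (M + 1)), (a₂ : ℕ) ≤ N → a₁ ≤ a₂ →
      (∀ c : Fin M, a₁ ≤ c.castSucc → c.succ ≤ a₂ → h c.succ ≤ h c.castSucc + 1) →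
      ∀ e, h a₁ ≤ e → e ≤ h a₂ → ∃ a, a₁ ≤ a ∧ a ≤ a₂ ∧ h a = e by
    intro a₁ a₂ h12 hstep e he1 he2
    exact H (a₂ : ℕ) a₁ a₂ le_rfl h12 hstep e he1 he2
  intro N
  induction N with
  | zero =>
    intro a₁ a₂ hN h12 _ e he1 he2
    have : a₁ = a₂ := by
      apply Fin.ext
      have := Fin.le_def.mp h12
      omega
    subst this
    exact ⟨a₁, le_rfl, le_rfl, by omega⟩
  | succ N ih =>
    intro a₁ a₂ hN h12 hstep e he1 he2
    by_cases heq : h a₂ = e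
    · exact ⟨a₂, h12, le_rfl, heq⟩
    have helt : e < h a₂ := by omega
    have hne : a₁ ≠ a₂ := by
      rintro rfl
      omega
    have hlt : (a₁ : ℕ) < (a₂ : ℕ) := by
      have := Fin.le_def.mp h12
      have : (a₁ : ℕ) ≠ (a₂ : ℕ) := fun h => hne (Fin.ext h)
      omega
    have hwM : (a₂ : ℕ) - 1 < M := by
      have := a₂.2
      omega
    set w : Fin M := ⟨(a₂ : ℕ) - 1, hwM⟩ with hw
    have hwsucc : w.succ = a₂ := by
      apply Fin.ext
      simp [hw, Fin.val_succ]
      omega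
    have hw1 : a₁ ≤ w.castSucc := by
      rw [Fin.le_def]
      simp [hw, Fin.coe_castSucc]
      omega
    have hstepw := hstep w hw1 (by rw [hwsucc])
    rw [hwsucc] at hstepw
    have he2' : e ≤ h w.castSucc := by omega
    obtain ⟨a, ha1, ha2, ha3⟩ := ih a₁ w.castSucc
      (by simp [hw, Fin.coe_castSucc]; omega) hw1
      (fun c hc1 hc2 => hstep c hc1 (le_trans hc2 (by
        rw [Fin.le_def]
        show (a₂ : ℕ) - 1 ≤ (a₂ : ℕ)
        omega))) e he1 he2'
    refine ⟨a, ha1, le_trans ha2 ?_, ha3⟩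
    rw [Fin.le_def]
    show (a₂ : ℕ) - 1 ≤ (a₂ : ℕ)
    omega

lemma block_interval (hg : IMono i g) {a₁ a₂ a : Fin (M + 1)}
    (h1 : i ≤ (g a₁ : ℕ)) (h2 : (g a₂ : ℕ) ≤ i + 1) (ha1 : a₁ ≤ a) (ha2 : a ≤ a₂) :
    i ≤ (g a : ℕ) ∧ (g a : ℕ) ≤ i + 1 := by
  constructor
  · rcases hg a₁ a ha1 with h | h
    · have := Fin.le_def.mp h
      omega
    · omega
  · rcases hg a a₂ ha2 with h | h
    · have := Fin.le_def.mp h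
      omega
    · omega

lemma block_min_max (hi : i < n) (hg : IMono i g) (hfull : Full i g)
    (hrk : rk i g = k + 1) :
    ∃ a₁ a₂ : Fin (M + 1), a₁ ≤ a₂ ∧
      (i ≤ (g a₁ : ℕ) ∧ (g a₁ : ℕ) ≤ i + 1) ∧
      (i ≤ (g a₂ : ℕ) ∧ (g a₂ : ℕ) ≤ i + 1) ∧
      (∀ a, i ≤ (g a : ℕ) → (g a : ℕ) ≤ i + 1 → a₁ ≤ a ∧ a ≤ a₂) ∧
      liftNat i k g a₁ ≤ i + 1 ∧ i + 2*k + 1 ≤ liftNat i k g a₂ := by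
  classical
  obtain ⟨a0, ha0⟩ := hfull ⟨i + 1, by omega⟩ (by simp)
  have ha0v : (g a0 : ℕ) = i + 1 := by rw [ha0]
  set bs := Finset.univ.filter
    (fun a : Fin (M + 1) => i ≤ (g a : ℕ) ∧ (g a : ℕ) ≤ i + 1) with hbs
  have hbsne : bs.Nonempty := ⟨a0, by simp [hbs]; omega⟩
  set a₁ := bs.min' hbsne with ha₁
  set a₂ := bs.max' hbsne with ha₂
  have hmem1 : i ≤ (g a₁ : ℕ) ∧ (g a₁ : ℕ) ≤ i + 1 := by
    have := bs.min'_mem hbsne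
    simpa [hbs] using this
  have hmem2 : i ≤ (g a₂ : ℕ) ∧ (g a₂ : ℕ) ≤ i + 1 := by
    have := bs.max'_mem hbsne
    simpa [hbs] using this
  have hbounds : ∀ a, i ≤ (g a : ℕ) → (g a : ℕ) ≤ i + 1 → a₁ ≤ a ∧ a ≤ a₂ := by
    intro a h1 h2
    exact ⟨bs.min'_le a (by simp [hbs]; omega), bs.le_max' a (by simp [hbs]; omega)⟩
  have h12 : a₁ ≤ a₂ := bs.min'_le _ (bs.max'_mem hbsne)
  have hD0 : Dlt g a₁ = 0 := by
    rw [Dlt, Finset.card_eq_zero, Finset.eq_empty_iff_forall_notMem]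
    intro c hcmem
    rw [Finset.mem_filter] at hcmem
    obtain ⟨_, hle, hdesc⟩ := hcmem
    have hdv := drop_vals hg (Fin.castSucc_le_succ c) hdesc
    have hcb := (hbounds c.castSucc (by omega) (by omega)).1
    have h1 := Fin.le_def.mp hle
    have h2 := Fin.le_def.mp hcb
    simp only [Fin.val_succ, Fin.coe_castSucc] at h1 h2
    omega
  have hDfull : Dlt g a₂ = dcnt g := by
    apply le_antisymm (Dlt_le_dcnt g a₂)
    apply Finset.card_le_card
    intro c hc
    rw [mem_Desc] at hc
    rw [Finset.mem_filter]
    have hdv := drop_vals hg (Fin.castSucc_le_succ c) hc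
    refine ⟨Finset.mem_univ _, (hbounds c.succ (by omega) (by omega)).2, hc⟩
  refine ⟨a₁, a₂, h12, hmem1, hmem2, hbounds, ?_, ?_⟩
  · unfold liftNat
    rw [if_neg (by omega), if_pos (by omega), hD0]
    omega
  · by_cases htok : Htok i g
    · have hdc := (dcnt_facts hrk).1 htok
      have hga2 : (g a₂ : ℕ) = i + 1 := by
        rcases Nat.lt_or_ge ((g a₂ : ℕ)) (i + 1) with h | h
        · exfalso
          obtain ⟨b, hb1, hb2⟩ := htok a₂ (by omega)
          have := (hbounds b (by omega) (by omega)).2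
          have heq : b = a₂ := le_antisymm this hb1
          rw [heq] at hb2
          omega
        · omega
      unfold liftNat
      rw [if_neg (by omega), if_pos (by omega), hDfull]
      omega
    · have hdc := (dcnt_facts hrk).2 htok
      obtain ⟨a₀, ha₀, hno⟩ := htok_of_not htok
      have hga2 : (g a₂ : ℕ) = i := by
        have hle := (hbounds a₀ (by omega) (by omega)).2
        rcases Nat.lt_or_ge ((g a₂ : ℕ)) (i + 1) with h | h
        · omega
        · exfalso
          exact hno a₂ hle (by omega)
      unfold liftNat
      rw [if_neg (by omega), if_pos (by omega), hDfull]
      omega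

lemma lift_cov (hi : i < n) (hg : IMono i g) (hfull : Full i g)
    (hrk : rk i g = k + 1) (p : Fin (n + 2*k + 2)) (hp1 : (p : ℕ) ≠ i)
    (hp2 : (p : ℕ) ≠ i + 2*k + 2) : ∃ a, liftNat i k g a = (p : ℕ) := by
  have hpb := p.2
  rcases Nat.lt_or_ge (p : ℕ) i with hA | hA
  · obtain ⟨a, ha⟩ := hfull ⟨(p : ℕ), by omega⟩ (by simp; omega)
    have hav : (g a : ℕ) = (p : ℕ) := by rw [ha]
    refine ⟨a, ?_⟩
    unfold liftNat
    rw [if_pos (by omega)]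
    omega
  rcases Nat.lt_or_ge (i + 2*k + 2) (p : ℕ) with hB | hB
  · obtain ⟨a, ha⟩ := hfull ⟨(p : ℕ) - (2*k + 1), by omega⟩ (by simp; omega)
    have hav : (g a : ℕ) = (p : ℕ) - (2*k + 1) := by rw [ha]
    refine ⟨a, ?_⟩
    unfold liftNat
    rw [if_neg (by omega), if_neg (by omega)]
    omega
  · -- interior block position
    obtain ⟨a₁, a₂, h12, hm1, hm2, hbounds, hl1, hl2⟩ := block_min_max hi hg hfull hrk
    have hstep : ∀ c : Fin M, a₁ ≤ c.castSucc → c.succ ≤ a₂ →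
        liftNat i k g c.succ ≤ liftNat i k g c.castSucc + 1 := by
      intro c hc1 hc2
      have hbc := block_interval hg hm1.1 hm2.2 hc1 (le_trans (Fin.castSucc_le_succ c) hc2)
      have hbs := block_interval hg hm1.1 hm2.2 (le_trans hc1 (Fin.castSucc_le_succ c)) hc2
      have hDs := Dlt_succ g c
      by_cases hd : g c.succ < g c.castSucc
      · rw [if_pos hd] at hDs
        have hd' := Fin.lt_def.mp hd
        unfold liftNat
        rw [if_neg (by omega), if_pos (by omega), if_neg (by omega), if_pos (by omega)]
        omega
      · rw [if_neg hd, Nat.add_zero] at hDs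
        have hd' := Fin.le_def.mp (not_lt.mp hd)
        unfold liftNat
        rw [if_neg (by omega), if_pos (by omega), if_neg (by omega), if_pos (by omega)]
        omega
    obtain ⟨a, _, _, ha⟩ := ivt (liftNat i k g) a₁ a₂ h12 hstep (p : ℕ)
      (by omega) (by omega)
    exact ⟨a, ha⟩

/-- Existence of the canonical lift as an order homomorphism. -/
lemma exists_lift (hi : i < n) (hg : IMono i g) (hfull : Full i g)
    (hrk : rk i g = k + 1) :
    ∃ β : Fin (M + 1) →o Fin (n + 2*k + 2),
      (∀ p : Fin (n + 2*k + 2), (p : ℕ) ≠ i → (p : ℕ) ≠ i + 2*k + 2 → ∃ a, β a = p) ∧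
      (∀ a, Wf n i k (β a) = g a) := by
  refine ⟨⟨fun a => ⟨liftNat i k g a, liftNat_lt hi hg hrk a⟩, ?_⟩, ?_, ?_⟩
  · rw [Fin.monotone_iff_le_succ]
    intro c
    rw [Fin.le_def]
    exact liftNat_mono_step hg hrk c
  · intro p hp1 hp2
    obtain ⟨a, ha⟩ := lift_cov hi hg hfull hrk p hp1 hp2
    exact ⟨a, Fin.ext ha⟩
  · intro a
    apply Fin.ext
    rw [Wf_val hi]
    exact liftNat_wnat hi hg hrk a

/-- Uniqueness of the lift: any covering lift agrees with the canonical one. -/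
lemma lift_unique (hi : i < n) (hg : IMono i g)
    (β : Fin (M + 1) →o Fin (n + 2*k + 2))
    (hcov : ∀ p : Fin (n + 2*k + 2), (p : ℕ) ≠ i → (p : ℕ) ≠ i + 2*k + 2 → ∃ a, β a = p)
    (hval : ∀ a, Wf n i k (β a) = g a) :
    ∀ a, (β a : ℕ) = liftNat i k g a := by
  have hvaln : ∀ a, Wnat i k (β a) = (g a : ℕ) := by
    intro a
    have := congrArg Fin.val (hval a)
    rw [Wf_val hi] at this
    exact this
  -- block characterization
  have hblkgen : ∀ b, i ≤ (g b : ℕ) → (g b : ℕ) ≤ i + 1 →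
      i ≤ (β b : ℕ) ∧ (β b : ℕ) ≤ i + 2*k + 2 ∧
        ((β b : ℕ) - i) % 2 = ((g b : ℕ) - i) := by
    intro b h1 h2
    rcases Nat.lt_or_ge ((g b : ℕ)) (i + 1) with h | h
    · have := Wnat_eq_i.mp (by rw [hvaln b]; omega)
      omega
    · have := Wnat_eq_ip1.mp (by rw [hvaln b]; omega)
      omega
  suffices H : ∀ (N : ℕ) (a : Fin (M + 1)), (a : ℕ) = N → (β a : ℕ) = liftNat i k g a by
    intro a
    exact H (a : ℕ) a rfl
  intro N
  induction N using Nat.strong_induction_on with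
  | _ N ih =>
  intro a ha
  rcases Nat.lt_or_ge (g a : ℕ) i with hx | hx
  · have h := Wnat_lt_i (i := i) (k := k) (p := (β a : ℕ)) (by rw [hvaln a]; omega)
    have := hvaln a
    unfold liftNat
    rw [if_pos hx]
    omega
  rcases Nat.lt_or_ge (i + 1) (g a : ℕ) with hx2 | hx2
  · have h := Wnat_ge (i := i) (k := k) (p := (β a : ℕ)) (by rw [hvaln a]; omega)
    have := hvaln a
    unfold liftNat
    rw [if_neg (by omega), if_neg (by omega)]
    omega
  · -- a is a block position
    have hblk := hblkgen a hx (by omega)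
    by_cases hprev : ∃ b : Fin (M + 1), (b : ℕ) < (a : ℕ) ∧ i ≤ (g b : ℕ) ∧ (g b : ℕ) ≤ i + 1
    · -- there is an earlier block position; use the previous position
      obtain ⟨b₀, hb₀1, hb₀2, hb₀3⟩ := hprev
      have haN : 1 ≤ (a : ℕ) := by omega
      have hpM : (a : ℕ) - 1 < M := by have := a.2; omega
      set c : Fin M := ⟨(a : ℕ) - 1, hpM⟩ with hc
      have hsc : c.succ = a := by
        apply Fin.ext
        simp [hc, Fin.val_succ]
        omega
      have hcsv : (c.castSucc : ℕ) = (a : ℕ) - 1 := rfl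
      -- the previous position is a block position
      have hprevblk : i ≤ (g c.castSucc : ℕ) ∧ (g c.castSucc : ℕ) ≤ i + 1 := by
        constructor
        · rcases hg b₀ c.castSucc (by rw [Fin.le_def, hcsv]; omega) with h | h
          · have := Fin.le_def.mp h
            omega
          · omega
        · rcases hg c.castSucc a (by rw [Fin.le_def, hcsv]; omega) with h | h
          · have := Fin.le_def.mp h
            omega
          · omega
      have hprevblkβ := hblkgen c.castSucc hprevblk.1 hprevblk.2
      have IH : (β c.castSucc : ℕ) = liftNat i k g c.castSucc :=
        ih ((a : ℕ) - 1) (by omega) c.castSucc hcsv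
      -- step bound: β a ≤ β prev + 1
      have hstep : (β a : ℕ) ≤ (β c.castSucc : ℕ) + 1 := by
        by_contra hcon
        push_neg at hcon
        have hqb : (β c.castSucc : ℕ) + 1 < n + 2*k + 2 := by
          have := (β a).2
          omega
        obtain ⟨a', ha'⟩ := hcov ⟨(β c.castSucc : ℕ) + 1, hqb⟩
          (by show (β c.castSucc : ℕ) + 1 ≠ i; omega)
          (by show (β c.castSucc : ℕ) + 1 ≠ i + 2*k + 2; omega)
        have hv : (β a' : ℕ) = (β c.castSucc : ℕ) + 1 := by rw [ha']
        have h1 : ¬ a' ≤ c.castSucc := by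
          intro h
          have := ord_val_mono β (Fin.le_def.mp h)
          omega
        have h2 : ¬ a ≤ a' := by
          intro h
          have := ord_val_mono β (Fin.le_def.mp h)
          omega
        push_neg at h1 h2
        have hv1 := Fin.lt_def.mp h1
        have hv2 := Fin.lt_def.mp h2
        rw [hcsv] at hv1
        omega
      have hmono : (β c.castSucc : ℕ) ≤ (β a : ℕ) :=
        ord_val_mono β (by rw [hcsv]; omega)
      -- liftNat formulas at both positions
      have hliftprev : liftNat i k g c.castSucc =
          i + 2*(Dlt g c.castSucc) + ((g c.castSucc : ℕ) - i) := by
        unfold liftNat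
        rw [if_neg (by omega), if_pos (by omega)]
      have hlifta : liftNat i k g a = i + 2*(Dlt g a) + ((g a : ℕ) - i) := by
        unfold liftNat
        rw [if_neg (by omega), if_pos (by omega)]
      rw [hlifta]
      rw [hliftprev] at IH
      by_cases hd : g c.succ < g c.castSucc
      · -- descent
        have hDs := Dlt_succ g c
        rw [if_pos hd] at hDs
        have hDa : Dlt g a = Dlt g c.castSucc + 1 := by rw [← hsc]; exact hDs
        have hd' := Fin.lt_def.mp hd
        rw [hsc] at hd'
        omega
      · have hDs := Dlt_succ g c
        rw [if_neg hd, Nat.add_zero] at hDs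
        have hDa : Dlt g a = Dlt g c.castSucc := by rw [← hsc]; exact hDs
        have hd' := Fin.le_def.mp (not_lt.mp hd)
        rw [hsc] at hd'
        omega
    · -- a is the first block position
      push_neg at hprev
      have hble : (β a : ℕ) ≤ i + 1 := by
        by_contra hcon
        push_neg at hcon
        have hqb : (β a : ℕ) - 1 < n + 2*k + 2 := by
          have := (β a).2
          omega
        obtain ⟨a', ha'⟩ := hcov ⟨(β a : ℕ) - 1, hqb⟩
          (by show (β a : ℕ) - 1 ≠ i; omega)
          (by show (β a : ℕ) - 1 ≠ i + 2*k + 2; omega)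
        have hv : (β a' : ℕ) = (β a : ℕ) - 1 := by rw [ha']
        have hlt : (a' : ℕ) < (a : ℕ) := by
          by_contra h
          push_neg at h
          have := ord_val_mono β h
          omega
        have hga' : i ≤ (g a' : ℕ) ∧ (g a' : ℕ) ≤ i + 1 := by
          have hw := hvaln a'
          unfold Wnat at hw
          split_ifs at hw <;> omega
        have := hprev a' hlt hga'.1
        omega
      have hD0 : Dlt g a = 0 := by
        rw [Dlt, Finset.card_eq_zero, Finset.eq_empty_iff_forall_notMem]
        intro c hcmem
        rw [Finset.mem_filter] at hcmem
        obtain ⟨_, hle, hdesc⟩ := hcmem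
        have hdv := drop_vals hg (Fin.castSucc_le_succ c) hdesc
        have hlev := Fin.le_def.mp hle
        simp only [Fin.val_succ] at hlev
        have := hprev c.castSucc (by simp only [Fin.coe_castSucc]; omega) (by omega)
        omega
      unfold liftNat
      rw [if_neg (by omega), if_pos (by omega), hD0]
      omega

end Aux
end Q2S

open CategoryTheory Simplicial CategoryTheory.Limits

namespace Q2S
namespace Aux

section Stage

variable (n i : ℕ)

lemma pred_mono {k k' M : ℕ} (h : k ≤ k') {f : Fin (M + 1) → Fin (n + 1)}
    (hf : pred i k f) : pred i k' f := by
  rcases hf with h1 | ⟨h1, h2⟩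
  · exact Or.inl h1
  · exact Or.inr ⟨h1, le_trans h2 h⟩

variable (hi : i < n)

/-- The `k`-th stage of the filtration of the isoplex. -/
def stage (k : ℕ) : SSet where
  obj m := { f : (isoPlex n i).obj m // pred i k f.1 }
  map φ := TypeCat.ofHom fun f => ⟨(isoPlex n i).map φ f.1, by
    exact pred_comp f.1.2 hi f.2 φ.unop.toOrderHom⟩
  map_id m := by
    refine ConcreteCategory.hom_ext _ _ fun f => ?_
    exact Subtype.ext (ConcreteCategory.congr_hom ((isoPlex n i).map_id m) f.1)
  map_comp φ ψ := by
    refine ConcreteCategory.hom_ext _ _ fun f => ?_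
    exact Subtype.ext (ConcreteCategory.congr_hom ((isoPlex n i).map_comp φ ψ) f.1)

/-- Inclusion of a stage into the isoplex. -/
def stageIncl (k : ℕ) : stage n i hi k ⟶ isoPlex n i where
  app m := TypeCat.ofHom fun f => f.1
  naturality _ _ _ := rfl

/-- Inclusion between stages. -/
def stageStep (k k' : ℕ) (h : k ≤ k') : stage n i hi k ⟶ stage n i hi k' where
  app m := TypeCat.ofHom fun f => ⟨f.1, pred_mono n i h f.2⟩
  naturality _ _ _ := by
    refine ConcreteCategory.hom_ext _ _ fun f => ?_
    exact Subtype.ext rfl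

variable (k : ℕ)

/-- The characteristic map `Δ[n+2k+1] ⟶ stage (k+1)` of the step-`k` cell. -/
def stepChar : Δ[n + 2*k + 1] ⟶ stage n i hi (k + 1) where
  app M := TypeCat.ofHom fun α => ⟨⟨Wf n i k ∘ (SSet.stdSimplex.asOrderHom α), IMono_comp (Wf_IMono hi) _⟩,
    B1 hi (SSet.stdSimplex.asOrderHom α)⟩
  naturality _ _ φ := by
    refine ConcreteCategory.hom_ext _ _ fun α => ?_
    exact Subtype.ext (Subtype.ext rfl)

lemma horn_vertex_ne {v : Fin (n + 2*k + 1 + 1)}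
    (hv : v ∈ (({⟨i, by omega⟩, ⟨i + 2*k + 2, by omega⟩} : Set (Fin (n + 2*k + 1 + 1)))ᶜ)) :
    (v : ℕ) ≠ i ∧ (v : ℕ) ≠ i + 2*k + 2 := by
  simp only [Set.mem_compl_iff, Set.mem_insert_iff, Set.mem_singleton_iff, not_or] at hv
  constructor
  · intro h
    exact hv.1 (Fin.ext h)
  · intro h
    exact hv.2 (Fin.ext h)

/-- The attaching map of the step-`k` cell. -/
def stepAttach : twoSegalHorn (n + 2*k + 1) ⟨i, by omega⟩ ⟨i + 2*k + 2, by omega⟩ ⟶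
    stage n i hi k where
  app M := TypeCat.ofHom fun x => ⟨⟨Wf n i k ∘ (SSet.stdSimplex.asOrderHom x.1), IMono_comp (Wf_IMono hi) _⟩, by
    obtain ⟨v, hv, hmiss⟩ := x.2
    obtain ⟨h1, h2⟩ := horn_vertex_ne n i hi k hv
    exact B2 hi (SSet.stdSimplex.asOrderHom x.1) v h1 h2 hmiss⟩
  naturality _ _ φ := by
    refine ConcreteCategory.hom_ext _ _ fun x => ?_
    exact Subtype.ext (Subtype.ext rfl)

lemma step_comm :
    stepAttach n i hi k ≫ stageStep n i hi k (k + 1) (Nat.le_succ k) =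
      twoSegalHornIncl (n + 2*k + 1) ⟨i, by omega⟩ ⟨i + 2*k + 2, by omega⟩ ≫
        stepChar n i hi k := by
  apply SSet.hom_ext
  intro M
  refine ConcreteCategory.hom_ext _ _ fun x => ?_
  exact Subtype.ext (Subtype.ext rfl)

end Stage

section Push

variable {n i k : ℕ}

lemma full_rk_of_not_pred {M : ℕ} {f : Fin (M + 1) → Fin (n + 1)}
    (hf : pred i (k + 1) f) (hnf : ¬ pred i k f) :
    Full i f ∧ rk i f = k + 1 := by
  rcases hf with h1 | ⟨h1, h2⟩
  · exact absurd (Or.inl h1) hnf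
  · refine ⟨h1, ?_⟩
    rcases Nat.lt_or_ge (rk i f) (k + 1) with h | h
    · exact absurd (Or.inr ⟨h1, by omega⟩) hnf
    · omega

lemma cov_of_not_horn (hi : i < n) {M : SimplexCategoryᵒᵖ}
    (α : (Δ[n + 2*k + 1] : SSet.{0}).obj M)
    (h : ¬ ∃ v ∈ (({⟨i, by omega⟩, ⟨i + 2*k + 2, by omega⟩} :
        Set (Fin (n + 2*k + 1 + 1)))ᶜ), ∀ a, SSet.stdSimplex.asOrderHom α a ≠ v) :
    ∀ p : Fin (n + 2*k + 2), (p : ℕ) ≠ i → (p : ℕ) ≠ i + 2*k + 2 →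
      ∃ a, SSet.stdSimplex.asOrderHom α a = p := by
  intro p h1 h2
  by_contra hc
  push_neg at hc
  apply h
  refine ⟨p, ?_, hc⟩
  simp only [Set.mem_compl_iff, Set.mem_insert_iff, Set.mem_singleton_iff, not_or]
  constructor
  · intro he
    rw [he] at h1
    exact h1 rfl
  · intro he
    rw [he] at h2
    exact h2 rfl

lemma horn_of_pred (hi : i < n) {M : SimplexCategoryᵒᵖ}
    (α : (Δ[n + 2*k + 1] : SSet.{0}).obj M)
    (hp : pred i k (Wf n i k ∘ SSet.stdSimplex.asOrderHom α)) :
    ∃ v ∈ (({⟨i, by omega⟩, ⟨i + 2*k + 2, by omega⟩} :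
        Set (Fin (n + 2*k + 1 + 1)))ᶜ), ∀ a, SSet.stdSimplex.asOrderHom α a ≠ v := by
  by_contra h
  have hcov := cov_of_not_horn hi α h
  obtain ⟨hfull, hrk⟩ := B3 hi (SSet.stdSimplex.asOrderHom α) hcov
  rcases hp with hmiss | ⟨_, hle⟩
  · obtain ⟨j, hj, hm⟩ := hmiss
    obtain ⟨a, ha⟩ := hfull j hj
    exact hm a ha
  · omega

/-- The chosen lift of a new simplex of stage `k+1`. -/
noncomputable def theLift {hi : i < n} {M : SimplexCategoryᵒᵖ}
    (x : (stage n i hi (k + 1)).obj M) (h : ¬ pred i k x.1.1) :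
    Fin (M.unop.len + 1) →o Fin (n + 2*k + 2) :=
  (exists_lift hi x.1.2 (full_rk_of_not_pred x.2 h).1
    (full_rk_of_not_pred x.2 h).2).choose

lemma theLift_cov {hi : i < n} {M : SimplexCategoryᵒᵖ}
    (x : (stage n i hi (k + 1)).obj M) (h : ¬ pred i k x.1.1) :
    ∀ p : Fin (n + 2*k + 2), (p : ℕ) ≠ i → (p : ℕ) ≠ i + 2*k + 2 →
      ∃ a, theLift (hi := hi) x h a = p :=
  (exists_lift hi x.1.2 (full_rk_of_not_pred x.2 h).1
    (full_rk_of_not_pred x.2 h).2).choose_spec.1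

lemma theLift_val {hi : i < n} {M : SimplexCategoryᵒᵖ}
    (x : (stage n i hi (k + 1)).obj M) (h : ¬ pred i k x.1.1) :
    ∀ a, Wf n i k (theLift (hi := hi) x h a) = x.1.1 a :=
  (exists_lift hi x.1.2 (full_rk_of_not_pred x.2 h).1
    (full_rk_of_not_pred x.2 h).2).choose_spec.2

/-- Two covering lifts of the same word agree. -/
lemma lift_unique' (hi : i < n) {M : ℕ} {g : Fin (M + 1) → Fin (n + 1)} (hg : IMono i g)
    (β β' : Fin (M + 1) →o Fin (n + 2*k + 2))
    (hcov : ∀ p : Fin (n + 2*k + 2), (p : ℕ) ≠ i → (p : ℕ) ≠ i + 2*k + 2 → ∃ a, β a = p)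
    (hcov' : ∀ p : Fin (n + 2*k + 2), (p : ℕ) ≠ i → (p : ℕ) ≠ i + 2*k + 2 → ∃ a, β' a = p)
    (hval : ∀ a, Wf n i k (β a) = g a) (hval' : ∀ a, Wf n i k (β' a) = g a) :
    β = β' := by
  have h1 := lift_unique hi hg β hcov hval
  have h2 := lift_unique hi hg β' hcov' hval'
  apply OrderHom.ext
  funext a
  apply Fin.ext
  rw [h1 a, h2 a]

end Push

section Pushout

variable {n i : ℕ}

open Classical in
/-- The descent morphism out of stage `k+1` for a pushout cocone. -/
noncomputable def stepDesc (hi : i < n) (k : ℕ)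
    (s : PushoutCocone (stepAttach n i hi k)
      (twoSegalHornIncl (n + 2*k + 1) ⟨i, by omega⟩ ⟨i + 2*k + 2, by omega⟩)) :
    stage n i hi (k + 1) ⟶ s.pt where
  app M := TypeCat.ofHom fun x =>
    if h : pred i k x.1.1 then s.inl.app M ⟨x.1, h⟩
    else s.inr.app M (SSet.stdSimplex.objMk (theLift (hi := hi) x h))
  naturality M M' φ := by
    have hcondel : ∀ (y : (twoSegalHorn (n + 2*k + 1) ⟨i, by omega⟩
        ⟨i + 2*k + 2, by omega⟩).obj M'),
        s.inl.app M' ((stepAttach n i hi k).app M' y) = s.inr.app M' y.1 := by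
      intro y
      have h2 : (stepAttach n i hi k ≫ s.inl).app M' y =
          (twoSegalHornIncl (n + 2*k + 1) ⟨i, by omega⟩ ⟨i + 2*k + 2, by omega⟩ ≫
            s.inr).app M' y := by
        rw [s.condition]
      exact h2
    refine ConcreteCategory.hom_ext _ _ fun x => ?_
    set φo := φ.unop.toOrderHom with hφo
    show (if h : pred i k ((stage n i hi (k+1)).map φ x).1.1 then
        s.inl.app M' ⟨((stage n i hi (k+1)).map φ x).1, h⟩
      else s.inr.app M' (SSet.stdSimplex.objMk
        (theLift (hi := hi) ((stage n i hi (k+1)).map φ x) h))) =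
      s.pt.map φ (if h : pred i k x.1.1 then s.inl.app M ⟨x.1, h⟩
      else s.inr.app M (SSet.stdSimplex.objMk (theLift (hi := hi) x h)))
    by_cases h : pred i k x.1.1
    · have h' : pred i k ((stage n i hi (k+1)).map φ x).1.1 :=
        pred_comp x.1.2 hi h φo
      rw [dif_pos h', dif_pos h]
      calc s.inl.app M' ⟨((stage n i hi (k+1)).map φ x).1, h'⟩
          = s.inl.app M' ((stage n i hi k).map φ ⟨x.1, h⟩) :=
            congrArg _ (Subtype.ext rfl)
        _ = s.pt.map φ (s.inl.app M ⟨x.1, h⟩) :=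
            ConcreteCategory.congr_hom (s.inl.naturality φ) ⟨x.1, h⟩
    · rw [dif_neg h]
      have hfun : Wf n i k ∘ ((theLift (hi := hi) x h).comp φo) = x.1.1 ∘ φo := by
        funext a
        exact theLift_val (hi := hi) x h (φo a)
      by_cases h' : pred i k ((stage n i hi (k+1)).map φ x).1.1
      · rw [dif_pos h']
        have hp : pred i k (Wf n i k ∘ ((theLift (hi := hi) x h).comp φo)) := by
          rw [hfun]
          exact h'
        obtain ⟨v, hv, hmiss⟩ := horn_of_pred hi (Δ[n + 2*k + 1].map φ
          (SSet.stdSimplex.objMk (theLift (hi := hi) x h))) hp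
        calc s.inl.app M' ⟨((stage n i hi (k+1)).map φ x).1, h'⟩
            = s.inl.app M' ((stepAttach n i hi k).app M'
                ⟨Δ[n + 2*k + 1].map φ (SSet.stdSimplex.objMk
                  (theLift (hi := hi) x h)), v, hv, hmiss⟩) :=
              congrArg _ (Subtype.ext (Subtype.ext hfun.symm))
          _ = s.inr.app M' (Δ[n + 2*k + 1].map φ
                (SSet.stdSimplex.objMk (theLift (hi := hi) x h))) :=
              hcondel _
          _ = s.pt.map φ (s.inr.app M (SSet.stdSimplex.objMk
                (theLift (hi := hi) x h))) :=
              ConcreteCategory.congr_hom (s.inr.naturality φ) _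
      · rw [dif_neg h']
        have hcov' : ∀ p : Fin (n + 2*k + 2), (p : ℕ) ≠ i → (p : ℕ) ≠ i + 2*k + 2 →
            ∃ a, (theLift (hi := hi) x h).comp φo a = p := by
          by_contra hc
          push_neg at hc
          obtain ⟨p, hp1, hp2, hmiss⟩ := hc
          have := B2 hi ((theLift (hi := hi) x h).comp φo) p hp1 hp2 hmiss
          rw [hfun] at this
          exact h' this
        have heqlift : theLift (hi := hi) ((stage n i hi (k+1)).map φ x) h' =
            (theLift (hi := hi) x h).comp φo := by
          apply lift_unique' hi ((stage n i hi (k+1)).map φ x).1.2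
          · exact theLift_cov (hi := hi) _ h'
          · exact hcov'
          · exact theLift_val (hi := hi) _ h'
          · intro a
            exact theLift_val (hi := hi) x h (φo a)
        rw [heqlift]
        exact ConcreteCategory.congr_hom (s.inr.naturality φ) (SSet.stdSimplex.objMk
          (theLift (hi := hi) x h))

open Classical in
lemma step_isPushout (hi : i < n) (k : ℕ) :
    IsPushout (stepAttach n i hi k)
      (twoSegalHornIncl (n + 2*k + 1) ⟨i, by omega⟩ ⟨i + 2*k + 2, by omega⟩)
      (stageStep n i hi k (k + 1) (Nat.le_succ k))
      (stepChar n i hi k) := by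
  apply IsPushout.of_isColimit (c := PushoutCocone.mk _ _ (step_comm n i hi k))
  apply PushoutCocone.IsColimit.mk (step_comm n i hi k) (fun s => stepDesc hi k s)
  · -- fac_left
    intro s
    apply SSet.hom_ext
    intro M
    refine ConcreteCategory.hom_ext _ _ fun x => ?_
    show (if h : pred i k x.1.1 then s.inl.app M ⟨x.1, h⟩
      else s.inr.app M (SSet.stdSimplex.objMk
        (theLift (hi := hi) ⟨x.1, pred_mono n i (Nat.le_succ k) x.2⟩ h))) = s.inl.app M x
    rw [dif_pos x.2]
    exact congrArg _ (Subtype.ext rfl)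
  · -- fac_right
    intro s
    apply SSet.hom_ext
    intro M
    refine ConcreteCategory.hom_ext _ _ fun α => ?_
    have hcondel : ∀ (y : (twoSegalHorn (n + 2*k + 1) ⟨i, by omega⟩
        ⟨i + 2*k + 2, by omega⟩).obj M),
        s.inl.app M ((stepAttach n i hi k).app M y) = s.inr.app M y.1 := by
      intro y
      have h2 : (stepAttach n i hi k ≫ s.inl).app M y =
          (twoSegalHornIncl (n + 2*k + 1) ⟨i, by omega⟩ ⟨i + 2*k + 2, by omega⟩ ≫
            s.inr).app M y := by
        rw [s.condition]
      exact h2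
    show (if h : pred i k ((stepChar n i hi k).app M α).1.1 then
        s.inl.app M ⟨((stepChar n i hi k).app M α).1, h⟩
      else s.inr.app M (SSet.stdSimplex.objMk
        (theLift (hi := hi) ((stepChar n i hi k).app M α) h))) = s.inr.app M α
    by_cases h : pred i k ((stepChar n i hi k).app M α).1.1
    · rw [dif_pos h]
      have hp : pred i k (Wf n i k ∘ SSet.stdSimplex.asOrderHom α) := h
      obtain ⟨v, hv, hmiss⟩ := horn_of_pred hi α hp
      calc s.inl.app M ⟨((stepChar n i hi k).app M α).1, h⟩
          = s.inl.app M ((stepAttach n i hi k).app M ⟨α, v, hv, hmiss⟩) :=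
            congrArg _ (Subtype.ext (Subtype.ext rfl))
        _ = s.inr.app M α := hcondel _
    · rw [dif_neg h]
      have hcov : ∀ p : Fin (n + 2*k + 2), (p : ℕ) ≠ i → (p : ℕ) ≠ i + 2*k + 2 →
          ∃ a, SSet.stdSimplex.asOrderHom α a = p := by
        by_contra hc
        push_neg at hc
        obtain ⟨p, hp1, hp2, hmiss⟩ := hc
        exact h (B2 hi (SSet.stdSimplex.asOrderHom α) p hp1 hp2 hmiss)
      have heqlift : theLift (hi := hi) ((stepChar n i hi k).app M α) h =
          SSet.stdSimplex.asOrderHom α := by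
        apply lift_unique' hi ((stepChar n i hi k).app M α).1.2
        · exact theLift_cov (hi := hi) _ h
        · exact hcov
        · exact theLift_val (hi := hi) _ h
        · intro a
          rfl
      rw [heqlift]
      rfl
  · -- uniqueness
    intro s m hm1 hm2
    apply SSet.hom_ext
    intro M
    refine ConcreteCategory.hom_ext _ _ fun x => ?_
    show m.app M x = (if h : pred i k x.1.1 then s.inl.app M ⟨x.1, h⟩
      else s.inr.app M (SSet.stdSimplex.objMk (theLift (hi := hi) x h)))
    by_cases h : pred i k x.1.1
    · rw [dif_pos h]
      have he : x = (stageStep n i hi k (k+1) (Nat.le_succ k)).app M ⟨x.1, h⟩ :=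
        Subtype.ext rfl
      have h2 : m.app M ((stageStep n i hi k (k+1) (Nat.le_succ k)).app M ⟨x.1, h⟩) =
          s.inl.app M ⟨x.1, h⟩ :=
        ConcreteCategory.congr_hom (congrArg (fun (f : _ ⟶ s.pt) => f.app M) hm1) ⟨x.1, h⟩
      exact (congrArg (m.app M) he).trans h2
    · rw [dif_neg h]
      have h2 : m.app M ((stepChar n i hi k).app M
          (SSet.stdSimplex.objMk (theLift (hi := hi) x h))) =
          s.inr.app M (SSet.stdSimplex.objMk (theLift (hi := hi) x h)) :=
        ConcreteCategory.congr_hom (congrArg (fun (f : _ ⟶ s.pt) => f.app M) hm2)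
          (SSet.stdSimplex.objMk (theLift (hi := hi) x h))
      have he : (stepChar n i hi k).app M
          (SSet.stdSimplex.objMk (theLift (hi := hi) x h)) = x := by
        apply Subtype.ext
        apply Subtype.ext
        funext a
        exact theLift_val (hi := hi) x h a
      exact (congrArg (m.app M) he.symm).trans h2

end Pushout

section Colim

variable (n i : ℕ) (hi : i < n)

/-- The filtration functor `ℕ ⥤ SSet`. -/
def filtF : ℕ ⥤ SSet where
  obj k := stage n i hi k
  map {a b} h := stageStep n i hi a b (leOfHom h)
  map_id a := by
    apply SSet.hom_ext
    intro M
    refine ConcreteCategory.hom_ext _ _ fun x => ?_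
    exact Subtype.ext rfl
  map_comp f g := by
    apply SSet.hom_ext
    intro M
    refine ConcreteCategory.hom_ext _ _ fun x => ?_
    exact Subtype.ext rfl

/-- The cocone over the filtration with apex the isoplex. -/
def filtCocone : Cocone (filtF n i hi) where
  pt := isoPlex n i
  ι :=
    { app := fun k => stageIncl n i hi k
      naturality := fun a b h => by
        apply SSet.hom_ext
        intro M
        refine ConcreteCategory.hom_ext _ _ fun x => ?_
        rfl }

lemma mem_pred_dcnt {M : SimplexCategoryᵒᵖ} (x : (isoPlex n i).obj M) :
    pred i (dcnt x.1 + 1) x.1 := by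
  classical
  by_cases hm : Miss i x.1
  · exact Or.inl hm
  · refine Or.inr ⟨not_miss_iff.mp hm, ?_⟩
    rw [rk]
    split_ifs <;> omega

lemma ι_stable (s : Cocone (filtF n i hi)) {M : SimplexCategoryᵒᵖ} (j j' : ℕ)
    (h : j ≤ j') (x : (isoPlex n i).obj M) (hx : pred i j x.1) :
    (s.ι.app j').app M ⟨x, pred_mono n i h hx⟩ = (s.ι.app j).app M ⟨x, hx⟩ := by
  have h1 := congrArg (fun (f : _ ⟶ s.pt) => f.app M) (s.ι.naturality (homOfLE h))
  exact ConcreteCategory.congr_hom h1 ⟨x, hx⟩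

/-- The filtration cocone is a colimit. -/
noncomputable def filtIsColimit : IsColimit (filtCocone n i hi) where
  desc s :=
    { app := fun M => TypeCat.ofHom fun x => (s.ι.app (dcnt x.1 + 1)).app M ⟨x, mem_pred_dcnt n i x⟩
      naturality := fun M M' φ => by
        refine ConcreteCategory.hom_ext _ _ fun x => ?_
        set φo := φ.unop.toOrderHom with hφo
        set y := (isoPlex n i).map φ x with hy
        have hd : dcnt y.1 + 1 ≤ dcnt x.1 + 1 :=
          Nat.add_le_add_right (dcnt_comp_le (n := n) x.1 φo) 1
        show (s.ι.app (dcnt y.1 + 1)).app M' ⟨y, mem_pred_dcnt n i y⟩ =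
          s.pt.map φ ((s.ι.app (dcnt x.1 + 1)).app M ⟨x, mem_pred_dcnt n i x⟩)
        have h1 : (s.ι.app (dcnt x.1 + 1)).app M'
            ⟨y, pred_mono n i hd (mem_pred_dcnt n i y)⟩ =
            (s.ι.app (dcnt y.1 + 1)).app M' ⟨y, mem_pred_dcnt n i y⟩ :=
          ι_stable n i hi s _ _ hd y (mem_pred_dcnt n i y)
        rw [← h1]
        have h2 : s.pt.map φ ((s.ι.app (dcnt x.1 + 1)).app M ⟨x, mem_pred_dcnt n i x⟩) =
            (s.ι.app (dcnt x.1 + 1)).app M' ((stage n i hi (dcnt x.1 + 1)).map φ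
              ⟨x, mem_pred_dcnt n i x⟩) :=
          (ConcreteCategory.congr_hom ((s.ι.app (dcnt x.1 + 1)).naturality φ)
            ⟨x, mem_pred_dcnt n i x⟩).symm
        rw [h2]
        exact congrArg _ (Subtype.ext rfl) }
  fac s j := by
    apply SSet.hom_ext
    intro M
    refine ConcreteCategory.hom_ext _ _ fun x => ?_
    show (s.ι.app (dcnt x.1.1 + 1)).app M ⟨x.1, mem_pred_dcnt n i x.1⟩ =
      (s.ι.app j).app M x
    have h1 : (s.ι.app (max j (dcnt x.1.1 + 1))).app M
        ⟨x.1, pred_mono n i (le_max_right _ _) (mem_pred_dcnt n i x.1)⟩ =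
        (s.ι.app (dcnt x.1.1 + 1)).app M ⟨x.1, mem_pred_dcnt n i x.1⟩ :=
      ι_stable n i hi s _ _ (le_max_right _ _) x.1 (mem_pred_dcnt n i x.1)
    have h2 : (s.ι.app (max j (dcnt x.1.1 + 1))).app M
        ⟨x.1, pred_mono n i (le_max_left _ _) x.2⟩ = (s.ι.app j).app M ⟨x.1, x.2⟩ :=
      ι_stable n i hi s _ _ (le_max_left _ _) x.1 x.2
    rw [← h1]
    exact h2
  uniq s m hm := by
    apply SSet.hom_ext
    intro M
    refine ConcreteCategory.hom_ext _ _ fun x => ?_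
    show m.app M x = (s.ι.app (dcnt x.1 + 1)).app M ⟨x, mem_pred_dcnt n i x⟩
    have h1 := ConcreteCategory.congr_hom (congrArg (fun (f : _ ⟶ s.pt) => f.app M)
      (hm (dcnt x.1 + 1))) ⟨x, mem_pred_dcnt n i x⟩
    exact h1

/-- Map exhibiting the iso-horn as a retract (in fact isomorph) of stage `0`. -/
def hornToStage0 : isoHorn n i ⟶ stage n i hi 0 where
  app M := TypeCat.ofHom fun x => ⟨x.1, Or.inl x.2⟩
  naturality _ _ _ := by
    refine ConcreteCategory.hom_ext _ _ fun x => ?_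
    exact Subtype.ext rfl

def stage0ToHorn : stage n i hi 0 ⟶ isoHorn n i where
  app M := TypeCat.ofHom fun x => ⟨x.1, by
    rcases x.2 with h | ⟨hfull, hrk⟩
    · exact h
    · exact absurd (one_le_rk x.1.2 hfull hi) (by omega)⟩
  naturality _ _ _ := by
    refine ConcreteCategory.hom_ext _ _ fun x => ?_
    exact Subtype.ext rfl

end Colim

/-- inner form. -/
theorem isoHornIncl_anodyne_aux (n i : ℕ) (hn : 2 ≤ n) (hi : i < n) :
    TwoSegalAnodyne (isoHornIncl n i) := by
  intro P hP hle
  obtain ⟨hpo, hret, htc⟩ := hP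
  have hsucc : ∀ j : ℕ, ¬IsMax j →
      P ((filtF n i hi).map (homOfLE (Order.le_succ j))) := by
    intro j _
    have hpush := step_isPushout hi j
    have hhorn : twoSegalHornClass
        (twoSegalHornIncl (n + 2*j + 1) ⟨i, by omega⟩ ⟨i + 2*j + 2, by omega⟩) := by
      apply TwoSegalHorns.mk (n + 2*j + 1) ⟨i, by omega⟩ ⟨i + 2*j + 2, by omega⟩
      · omega
      · constructor
        · show (i : ℕ) + 1 < i + 2*j + 2
          omega
        · rintro ⟨h1, h2⟩
          simp only [Fin.val_mk] at h1 h2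
          omega
    have hstep := hpo.of_isPushout hpush (hle _ hhorn)
    exact hstep
  have hlim : ∀ j : ℕ, Order.IsSuccLimit j →
      Nonempty (IsColimit (coconeAt (filtF n i hi) j)) := by
    intro j hj
    exfalso
    rcases j with _ | j
    · exact hj.not_isMin isMin_bot
    · exact Order.not_isSuccPrelimit_succ j hj.isSuccPrelimit
  have hcolim := htc ℕ (filtF n i hi) hsucc hlim (filtCocone n i hi)
    (filtIsColimit n i hi)
  have hretract : IsRetractOf (isoHornIncl n i) ((filtCocone n i hi).ι.app ⊥) := by
    refine ⟨hornToStage0 n i hi, stage0ToHorn n i hi, 𝟙 _, 𝟙 _, ?_, ?_, ?_, ?_⟩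
    · apply SSet.hom_ext
      intro M
      refine ConcreteCategory.hom_ext _ _ fun x => ?_
      exact Subtype.ext rfl
    · exact Category.id_comp _
    · apply SSet.hom_ext
      intro M
      refine ConcreteCategory.hom_ext _ _ fun x => ?_
      rfl
    · apply SSet.hom_ext
      intro M
      refine ConcreteCategory.hom_ext _ _ fun x => ?_
      rfl
  exact hret _ _ hretract hcolim

end Aux
end Q2S

/-- Every iso-horn inclusion `𝕍ᵢ[n] ↪ ∇̄ᵢ[n]` (`n ≥ 2`, `0 ≤ i ≤ n-1`)
lies in the weakly saturated class generated by the 2-Segal horn inclusions. -/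
theorem isoHornIncl_twoSegalAnodyne (n i : ℕ) (hn : 2 ≤ n) (hi : i < n) :
    Q2S.TwoSegalAnodyne (Q2S.isoHornIncl n i) :=
  Q2S.Aux.isoHornIncl_anodyne_aux n i hn hi
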